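/- arXiv:1003.5677 — 10 statements merged into one kernel-verified Lean document; each statement's English description precedes it below -/
import Mathlib

section
/- If z' is an attractor for a map f : Y → Y' between ultrametric spaces and (Y,u) is spherically complete, then z' lies in the image f(Y). -/
section Ultrametric

variable {Y Y' : Type*} {Γ Γ' : Type*} [LinearOrder Γ] [OrderTop Γ]
  [LinearOrder Γ'] [OrderTop Γ']

/-- The axioms of an ultrametric space with distance values in `Γ` (with top element `∞`). -/
def IsUltrametric (u : Y → Y → Γ) : Prop :=
  (∀ y z, u y z = ⊤ ↔ y = z) ∧
  (∀ x y z, min (u y x) (u x z) ≤ u y z) ∧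
  (∀ y z, u y z = u z y)

/-- The closed ball of radius `α` around `y`. -/
def closedBall (u : Y → Y → Γ) (α : Γ) (y : Y) : Set Y := {z | α ≤ u y z}

/-- `B(x,y)`, the smallest closed ball containing `x` and `y`. -/
def smallBall (u : Y → Y → Γ) (x y : Y) : Set Y := closedBall u (u x y) x

/-- A ball: a union of a nonempty collection of closed balls having a common element. -/
def IsBall (u : Y → Y → Γ) (S : Set Y) : Prop :=
  ∃ C : Set (Γ × Y), C.Nonempty ∧ (∃ y₀, ∀ p ∈ C, y₀ ∈ closedBall u p.1 p.2) ∧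
    S = ⋃ p ∈ C, closedBall u p.1 p.2

/-- Spherical completeness: every nest of balls has nonempty intersection. -/
def SphericallyComplete (u : Y → Y → Γ) : Prop :=
  ∀ N : Set (Set Y), N.Nonempty → (∀ B ∈ N, IsBall u B) →
    IsChain (· ⊆ ·) N → (⋂₀ N).Nonempty

/-- `z'` is an attractor for `f`. -/
def IsAttractor (u : Y → Y → Γ) (u' : Y' → Y' → Γ') (f : Y → Y') (z' : Y') : Prop :=
  ∀ y : Y, f y ≠ z' → ∃ z : Y,
    u' (f y) z' < u' (f z) z' ∧ f '' smallBall u y z ⊆ smallBall u' (f y) z'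

/-- A map is immediate if every element of the target is an attractor for it. -/
def Immediate (u : Y → Y → Γ) (u' : Y' → Y' → Γ') (f : Y → Y') : Prop :=
  ∀ z' : Y', IsAttractor u u' f z'

end Ultrametric

/-- If `z'` is an attractor for `f : Y → Y'` between ultrametric spaces and
`(Y,u)` is spherically complete, then `z'` lies in the image of `f`. -/
theorem attractor_mem_image {Y Y' : Type*} [Nonempty Y] {Γ Γ' : Type*}
    [LinearOrder Γ] [OrderTop Γ] [LinearOrder Γ'] [OrderTop Γ']
    (u : Y → Y → Γ) (u' : Y' → Y' → Γ')
    (hu : IsUltrametric u) (hu' : IsUltrametric u')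
    (f : Y → Y') (z' : Y') (hz' : IsAttractor u u' f z')
    (hY : SphericallyComplete u) :
    ∃ y : Y, f y = z' := by
  classical
  by_contra hno
  push_neg at hno
  obtain ⟨heq, htri, hsym⟩ := hu
  obtain ⟨heq', htri', hsym'⟩ := hu'
  choose g hg1 hg2 using fun y => hz' y (hno y)
  set γ : Y → Γ' := fun y => u' (f y) z' with hγ
  set B : Y → Set Y := fun y => smallBall u y (g y) with hB
  have selfB : ∀ x w : Y, x ∈ smallBall u x w := by
    intro x w
    show u x w ≤ u x x
    rw [(heq x x).mpr rfl]
    exact le_top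
  have gmem : ∀ y, g y ∈ B y := fun y => le_refl _
  have imageγ : ∀ y x, x ∈ B y → γ y ≤ γ x := by
    intro y x hx
    have h1 : u' (f y) z' ≤ u' (f y) (f x) := hg2 y ⟨x, hx, rfl⟩
    have h2 := htri' (f y) (f x) z'
    exact le_trans (le_min (by rw [hsym' (f x) (f y)]; exact h1) le_rfl) h2
  have claimA : ∀ y x, x ∈ B y → γ y < γ x → B x ⊆ B y := by
    intro y x hx hlt
    rcases le_or_gt (u y (g y)) (u x (g x)) with hle | hlt2
    · intro t ht
      show u y (g y) ≤ u y t
      exact le_trans (le_min hx (le_trans hle ht)) (htri x y t)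
    · exfalso
      have hy : y ∈ B x := by
        show u x (g x) ≤ u x y
        rw [hsym x y]
        exact le_of_lt (lt_of_lt_of_le hlt2 hx)
      exact absurd (imageγ x y hy) (not_le.mpr hlt)
  have hstep : ∀ w, B (g w) ⊆ B w := fun w => claimA w (g w) (gmem w) (hg1 w)
  set r : Y → Y → Prop := fun a b => b = a ∨ (B b ⊆ B a ∧ γ a < γ b) with hr
  have rtrans : ∀ {a b c : Y}, r a b → r b c → r a c := by
    rintro a b c (rfl | ⟨h1, h2⟩) (rfl | ⟨h3, h4⟩)
    · exact Or.inl rfl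
    · exact Or.inr ⟨h3, h4⟩
    · exact Or.inr ⟨h1, h2⟩
    · exact Or.inr ⟨h3.trans h1, h2.trans h4⟩
  have hbound : ∀ c : Set Y, IsChain r c → ∃ ub, ∀ a ∈ c, r a ub := by
    intro c hc
    rcases c.eq_empty_or_nonempty with rfl | ⟨x₁, hx₁⟩
    · exact ⟨Classical.arbitrary Y, by simp⟩
    have hN : (⋂₀ {S | ∃ x ∈ c, S = B x}).Nonempty := by
      apply hY
      · exact ⟨B x₁, x₁, hx₁, rfl⟩
      · rintro S ⟨x, hx, rfl⟩
        refine ⟨{(u x (g x), x)}, Set.singleton_nonempty _, ⟨x, ?_⟩, ?_⟩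
        · rintro p hp
          rw [Set.mem_singleton_iff] at hp
          subst hp
          exact selfB x (g x)
        · simp [hB, smallBall]
      · rintro S ⟨x, hx, rfl⟩ T ⟨x', hx', rfl⟩ hne
        rcases eq_or_ne x x' with rfl | hxx
        · exact absurd rfl hne
        rcases hc hx hx' hxx with (h | ⟨h1, _⟩) | (h | ⟨h1, _⟩)
        · exact absurd (congrArg B h) (Ne.symm hne)
        · exact Or.inr h1
        · exact absurd (congrArg B h) hne
        · exact Or.inl h1
    obtain ⟨y, hy⟩ := hN
    have hymem : ∀ x ∈ c, y ∈ B x := fun x hx =>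
      Set.mem_sInter.mp hy (B x) ⟨x, hx, rfl⟩
    by_cases hbad : ∃ x ∈ c, g y ∉ B x
    · obtain ⟨x₀, hx₀c, hx₀⟩ := hbad
      have hmin : ∀ x ∈ c, r x x₀ := by
        intro x hx
        rcases eq_or_ne x x₀ with rfl | hne
        · exact Or.inl rfl
        rcases hc hx hx₀c hne with h | h
        · exact h
        · rcases h with h | ⟨h1, h2⟩
          · exact Or.inl h.symm
          · exfalso
            have hlt : γ x₀ < γ y := lt_of_lt_of_le h2 (imageγ x y (hymem x hx))
            exact hx₀ (claimA x₀ y (hymem x₀ hx₀c) hlt (gmem y))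
      refine ⟨g x₀, fun x hx => ?_⟩
      exact rtrans (hmin x hx) (Or.inr ⟨hstep x₀, hg1 x₀⟩)
    · push_neg at hbad
      refine ⟨g y, fun x hx => ?_⟩
      have h2 : γ x < γ (g y) := lt_of_le_of_lt (imageγ x y (hymem x hx)) (hg1 y)
      exact Or.inr ⟨claimA x (g y) (hbad x hx) h2, h2⟩
  obtain ⟨m, hm⟩ := exists_maximal_of_chains_bounded hbound rtrans
  rcases hm (g m) (Or.inr ⟨hstep m, hg1 m⟩) with h | ⟨_, h2⟩
  · have := hg1 m
    rw [← h] at this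
    exact lt_irrefl _ this
  · exact absurd (hg1 m) (not_lt.mpr (le_of_lt h2))
end

section
/- If f : Y → Y' is an immediate map between ultrametric spaces and (Y,u) is spherically complete, then f is surjective and (Y',u') is spherically complete; moreover for every y ∈ Y and every ball B' in Y' containing fy there is a ball B in Y containing y with f(B) = B'. -/
set_option linter.unusedSectionVars false

set_option maxHeartbeats 1000000

namespace UltraAux

variable {Y Y' : Type*} {Γ Γ' : Type*} [LinearOrder Γ] [OrderTop Γ]
  [LinearOrder Γ'] [OrderTop Γ']

theorem mem_cb {u : Y → Y → Γ} {α : Γ} {x z : Y} : z ∈ closedBall u α x ↔ α ≤ u x z := Iff.rfl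

theorem self_mem {u : Y → Y → Γ} (hu : IsUltrametric u) (α : Γ) (x : Y) :
    x ∈ closedBall u α x := by
  show α ≤ u x x
  rw [(hu.1 x x).2 rfl]; exact le_top

theorem recenter {u : Y → Y → Γ} (hu : IsUltrametric u) {α : Γ} {x p : Y}
    (hp : p ∈ closedBall u α x) : closedBall u α x = closedBall u α p := by
  ext z
  simp only [mem_cb] at *
  constructor
  · intro hz; exact le_trans (le_min (by rw [hu.2.2]; exact hp) hz) (hu.2.1 x p z)
  · intro hz; exact le_trans (le_min hp hz) (hu.2.1 p x z)

theorem comparable {u : Y → Y → Γ} (hu : IsUltrametric u) {α β : Γ} {x w p : Y}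
    (h1 : p ∈ closedBall u α x) (h2 : p ∈ closedBall u β w) :
    closedBall u α x ⊆ closedBall u β w ∨ closedBall u β w ⊆ closedBall u α x := by
  rw [recenter hu h1, recenter hu h2]
  rcases le_total α β with h | h
  · right; intro z hz; exact le_trans h hz
  · left; intro z hz; exact le_trans h hz

theorem ball_nonempty {u : Y → Y → Γ} {B : Set Y} (hB : IsBall u B) : B.Nonempty := by
  obtain ⟨C, ⟨p, hp⟩, ⟨y₀, h0⟩, rfl⟩ := hB
  exact ⟨y₀, Set.mem_biUnion hp (h0 p hp)⟩

theorem smallBall_isBall {u : Y → Y → Γ} (hu : IsUltrametric u) (x y : Y) :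
    IsBall u (smallBall u x y) := by
  refine ⟨{(u x y, x)}, ⟨_, rfl⟩, ⟨x, ?_⟩, ?_⟩
  · rintro p rfl; exact self_mem hu _ _
  · simp [smallBall]

theorem hull_subset {u' : Y' → Y' → Γ'} (hu' : IsUltrametric u') {B' : Set Y'} {a' b' : Y'}
    (hB : IsBall u' B') (ha : a' ∈ B') (hb : b' ∈ B') : smallBall u' a' b' ⊆ B' := by
  obtain ⟨C, _, ⟨y₀, h0⟩, rfl⟩ := hB
  rw [Set.mem_iUnion₂] at ha hb
  obtain ⟨p, hp, hap⟩ := ha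
  obtain ⟨q, hq, hbq⟩ := hb
  rcases comparable hu' (h0 p hp) (h0 q hq) with h | h
  · -- everything inside ball q
    have hap' : a' ∈ closedBall u' q.1 q.2 := h hap
    refine fun z hz => Set.mem_biUnion hq ?_
    rw [recenter hu' hap'] at hbq ⊢
    exact le_trans hbq hz
  · have hbq' : b' ∈ closedBall u' p.1 p.2 := h hbq
    refine fun z hz => Set.mem_biUnion hp ?_
    rw [recenter hu' hap] at hbq' ⊢
    exact le_trans hbq' hz


set_option linter.unusedSectionVars false

theorem main_lemma [Nonempty Y] (u : Y → Y → Γ) (u' : Y' → Y' → Γ')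
    (hu : IsUltrametric u) (hu' : IsUltrametric u')
    (f : Y → Y') (hf : Immediate u u' f) (hY : SphericallyComplete u)
    (z' : Y') (y₀ : Y) :
    ∃ (α : Γ) (x : Y), f x = z' ∧ α ≤ u y₀ x ∧
      ∀ w : Y, α ≤ u y₀ w → u' (f y₀) z' ≤ u' (f y₀) (f w) := by
  classical
  by_cases hz0 : f y₀ = z'
  · refine ⟨⊤, y₀, hz0, ?_, ?_⟩
    · rw [(hu.1 y₀ y₀).2 rfl]
    · intro w hw
      have : y₀ = w := (hu.1 y₀ w).1 (top_le_iff.mp hw)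
      rw [← this, (hu'.1 (f y₀) (f y₀)).2 rfl]
      exact le_top
  choose! zf hzf1 hzf2 using hf z'
  set B : Y → Set Y := fun y => smallBall u y (zf y) with hBdef
  have hselfB : ∀ y, y ∈ B y := fun y => UltraAux.self_mem hu _ _
  have hzfB : ∀ y, zf y ∈ B y := fun y => le_refl _
  have hval : ∀ a b, f b ≠ z' → a ∈ B b → u' (f b) z' ≤ u' (f a) z' := by
    intro a b hb hab
    have h1 : f a ∈ smallBall u' (f b) z' := hzf2 b hb ⟨a, hab, rfl⟩
    have h1' : u' (f b) z' ≤ u' (f b) (f a) := h1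
    refine le_trans (le_min ?_ (le_refl _)) (hu'.2.1 (f b) (f a) z')
    rw [hu'.2.2 (f a) (f b)]; exact h1'
  have hclaim : ∀ a b, f a ≠ z' → f b ≠ z' → a ∈ B b →
      u' (f b) z' < u' (f a) z' → B a ⊆ B b := by
    intro a b ha hb hab hlt
    rcases UltraAux.comparable hu (hselfB a) hab with h | h
    · exact h
    · exact absurd (hval b a ha (h (hselfB b))) (not_le.mpr hlt)
  set rel : Y → Y → Prop :=
    fun a b => f a ≠ z' ∧ f b ≠ z' ∧ a ∈ B b ∧ u' (f b) z' < u' (f a) z' with hreldef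
  suffices hexists : ∃ x ∈ B y₀, f x = z' by
    obtain ⟨x, hx, hfx⟩ := hexists
    exact ⟨u y₀ (zf y₀), x, hfx, hx, fun w hw => hzf2 y₀ hz0 ⟨w, hw, rfl⟩⟩
  by_contra Hc
  push_neg at Hc
  obtain ⟨C, hmax, hsub⟩ := (IsChain.singleton (r := rel) (a := y₀)).exists_maxChain
  have hy₀C : y₀ ∈ C := hsub rfl
  have hfneC : ∀ y ∈ C, f y ≠ z' := by
    intro y hy
    by_cases h : y = y₀
    · rw [h]; exact hz0
    · rcases hmax.1 hy hy₀C h with h' | h'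
      · exact h'.1
      · exact h'.2.1
  have hchainB : IsChain (· ⊆ ·) (B '' C) := by
    rintro _ ⟨a, ha, rfl⟩ _ ⟨b, hb, rfl⟩ hne
    have hab : a ≠ b := fun h => hne (by rw [h])
    rcases hmax.1 ha hb hab with h | h
    · exact Or.inl (hclaim a b h.1 h.2.1 h.2.2.1 h.2.2.2)
    · exact Or.inr (hclaim b a h.1 h.2.1 h.2.2.1 h.2.2.2)
  obtain ⟨ys, hys⟩ := hY (B '' C) ⟨B y₀, Set.mem_image_of_mem _ hy₀C⟩
    (by rintro _ ⟨a, _, rfl⟩; exact UltraAux.smallBall_isBall hu _ _) hchainB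
  have hysB : ∀ y ∈ C, ys ∈ B y := fun y hy => hys _ (Set.mem_image_of_mem _ hy)
  obtain ⟨w, hw1, hw2, hw3⟩ : ∃ w, f w ≠ z' ∧ (∀ y ∈ C, B w ⊆ B y) ∧
      (∀ y ∈ C, u' (f y) z' ≤ u' (f w) z') := by
    by_cases hmin : ∃ m ∈ C, ∀ y ∈ C, ¬ rel y m
    · obtain ⟨m, hm, hmm⟩ := hmin
      have hrel : ∀ y ∈ C, y ≠ m → rel m y := by
        intro y hy hne
        rcases hmax.1 hm hy (fun h => hne h.symm) with h | h
        · exact h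
        · exact absurd h (hmm y hy)
      refine ⟨m, hfneC m hm, ?_, ?_⟩
      · intro y hy
        by_cases h : y = m
        · rw [h]
        · have hr := hrel y hy h
          exact hclaim m y hr.1 hr.2.1 hr.2.2.1 hr.2.2.2
      · intro y hy
        by_cases h : y = m
        · rw [h]
        · exact (hrel y hy h).2.2.2.le
    · push_neg at hmin
      have hysne : f ys ≠ z' := Hc ys (hysB y₀ hy₀C)
      have hstrict : ∀ y ∈ C, u' (f y) z' < u' (f ys) z' := by
        intro y hy
        obtain ⟨y', hy', hr⟩ := hmin y hy
        exact lt_of_lt_of_le hr.2.2.2 (hval ys y' hr.1 (hysB y' hy'))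
      exact ⟨ys, hysne,
        fun y hy => hclaim ys y hysne (hfneC y hy) (hysB y hy) (hstrict y hy),
        fun y hy => (hstrict y hy).le⟩
  have ht1 : u' (f w) z' < u' (f (zf w)) z' := hzf1 w hw1
  have htB : ∀ y ∈ C, zf w ∈ B y := fun y hy => hw2 y hy (hzfB w)
  have htne : f (zf w) ≠ z' := Hc (zf w) (htB y₀ hy₀C)
  have hrelt : ∀ y ∈ C, rel (zf w) y := fun y hy =>
    ⟨htne, hfneC y hy, htB y hy, lt_of_le_of_lt (hw3 y hy) ht1⟩
  have htC : zf w ∉ C := fun h => lt_irrefl _ (hrelt _ h).2.2.2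
  have heq : C = insert (zf w) C :=
    hmax.2 (hmax.1.insert fun b hb _ => Or.inl (hrelt b hb)) (Set.subset_insert _ _)
  exact htC (heq ▸ Set.mem_insert (zf w) C)

end UltraAux

/-- the Ultrametric Main Theorem. -/
theorem immediate_surjective_sphericallyComplete {Y Y' : Type*} [Nonempty Y] {Γ Γ' : Type*}
    [LinearOrder Γ] [OrderTop Γ] [LinearOrder Γ'] [OrderTop Γ']
    (u : Y → Y → Γ) (u' : Y' → Y' → Γ')
    (hu : IsUltrametric u) (hu' : IsUltrametric u')
    (f : Y → Y') (hf : Immediate u u' f)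
    (hY : SphericallyComplete u) :
    Function.Surjective f ∧ SphericallyComplete u' ∧
      ∀ y : Y, ∀ B' : Set Y', IsBall u' B' → f y ∈ B' →
        ∃ B : Set Y, IsBall u B ∧ y ∈ B ∧ f '' B = B' := by

  classical
  have hML := UltraAux.main_lemma u u' hu hu' f hf hY
  have hsurj : Function.Surjective f := by
    intro z'
    obtain ⟨α, x, hx, -, -⟩ := hML z' (Classical.arbitrary Y)
    exact ⟨x, hx⟩
  have hpart3 : ∀ y : Y, ∀ B' : Set Y', IsBall u' B' → f y ∈ B' →
      ∃ B : Set Y, IsBall u B ∧ y ∈ B ∧ f '' B = B' := by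
    intro y B' hB' hyB'
    set Dc : Set (Γ × Y) :=
      {p | y ∈ closedBall u p.1 p.2 ∧ ∀ w ∈ closedBall u p.1 p.2, f w ∈ B'} with hDc
    have htop : (⊤, y) ∈ Dc := by
      refine ⟨UltraAux.self_mem hu _ _, fun w hw => ?_⟩
      have : y = w := (hu.1 y w).1 (top_le_iff.mp hw)
      rw [← this]; exact hyB'
    refine ⟨⋃ p ∈ Dc, closedBall u p.1 p.2, ⟨Dc, ⟨_, htop⟩, ⟨y, fun p hp => hp.1⟩, rfl⟩,
      Set.mem_biUnion htop (UltraAux.self_mem hu _ _), ?_⟩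
    apply Set.Subset.antisymm
    · rintro _ ⟨x, hx, rfl⟩
      rw [Set.mem_iUnion₂] at hx
      obtain ⟨p, hp, hxp⟩ := hx
      exact hp.2 x hxp
    · intro z' hz'
      obtain ⟨α, x, hfx, hxmem, himg⟩ := hML z' y
      have hp : (α, y) ∈ Dc := by
        refine ⟨?_, fun w hw => UltraAux.hull_subset hu' hB' hyB' hz' (himg w hw)⟩
        show α ≤ u y y
        rw [(hu.1 y y).2 rfl]; exact le_top
      exact ⟨x, Set.mem_biUnion hp hxmem, hfx⟩
  refine ⟨hsurj, ?_, hpart3⟩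
  intro N' hN'ne hN'balls hN'chain
  set M : Y → Set (Set Y') := fun y => {B' | B' ∈ N' ∧ f y ∈ B'} with hM
  set Dc : Y → Set (Γ × Y) := fun y =>
    {p | y ∈ closedBall u p.1 p.2 ∧
      ∀ B' ∈ M y, ∀ w ∈ closedBall u p.1 p.2, f w ∈ B'} with hDc
  set D : Y → Set Y := fun y => ⋃ p ∈ Dc y, closedBall u p.1 p.2 with hD
  have htop : ∀ y, (⊤, y) ∈ Dc y := by
    intro y
    refine ⟨UltraAux.self_mem hu _ _, fun B' hB' w hw => ?_⟩
    have : y = w := (hu.1 y w).1 (top_le_iff.mp hw)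
    rw [← this]; exact hB'.2
  have hselfD : ∀ y, y ∈ D y := fun y =>
    Set.mem_biUnion (htop y) (UltraAux.self_mem hu _ _)
  have hDball : ∀ y, IsBall u (D y) := fun y =>
    ⟨Dc y, ⟨_, htop y⟩, ⟨y, fun p hp => hp.1⟩, rfl⟩
  have himg : ∀ y x, x ∈ D y → ∀ B' ∈ M y, f x ∈ B' := by
    intro y x hx B' hB'
    rw [hD, Set.mem_iUnion₂] at hx
    obtain ⟨p, hp, hxp⟩ := hx
    exact hp.2 B' hB' x hxp
  have hMsub : ∀ a b, a ∈ D b → M b ⊆ M a := by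
    intro a b hab B' hB'
    exact ⟨hB'.1, himg b a hab B' hB'⟩
  have hDmono : ∀ a b, a ∈ D b → D a ⊆ D b := by
    intro a b hab x hx
    rw [hD, Set.mem_iUnion₂] at hx
    obtain ⟨p, hp, hxp⟩ := hx
    have hab' := hab
    rw [hD, Set.mem_iUnion₂] at hab'
    obtain ⟨q, hq, haq⟩ := hab'
    rcases UltraAux.comparable hu hp.1 haq with h | h
    · exact Set.mem_biUnion hq (h hxp)
    · have hbp : b ∈ closedBall u p.1 p.2 := h hq.1
      have hpb : p ∈ Dc b :=
        ⟨hbp, fun B' hB' w hw => hp.2 B' (hMsub a b hab hB') w hw⟩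
      exact Set.mem_biUnion hpb hxp
  set rel : Y → Y → Prop := fun a b => M b ⊂ M a ∧ a ∈ D b with hrel
  obtain ⟨C, hmax, hsub⟩ :=
    (IsChain.singleton (r := rel) (a := Classical.arbitrary Y)).exists_maxChain
  have hCne : (Classical.arbitrary Y) ∈ C := hsub rfl
  have hchainD : IsChain (· ⊆ ·) (D '' C) := by
    rintro _ ⟨a, ha, rfl⟩ _ ⟨b, hb, rfl⟩ hne
    have hab : a ≠ b := fun h => hne (by rw [h])
    rcases hmax.1 ha hb hab with h | h
    · exact Or.inl (hDmono a b h.2)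
    · exact Or.inr (hDmono b a h.2)
  obtain ⟨w, hw⟩ := hY (D '' C) ⟨_, Set.mem_image_of_mem _ hCne⟩
    (by rintro _ ⟨a, _, rfl⟩; exact hDball a) hchainD
  have hwD : ∀ y ∈ C, w ∈ D y := fun y hy => hw _ (Set.mem_image_of_mem _ hy)
  by_cases hdone : ∀ B' ∈ N', f w ∈ B'
  · exact ⟨f w, fun B' hB' => hdone B' hB'⟩
  exfalso
  push_neg at hdone
  obtain ⟨B'₁, hB'₁N, hfwB'₁⟩ := hdone
  obtain ⟨z', hz'B'₁⟩ := UltraAux.ball_nonempty (hN'balls B'₁ hB'₁N)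
  have hB'₁sub : ∀ B'' ∈ M w, B'₁ ⊆ B'' := by
    intro B'' hB''
    have hne : B'₁ ≠ B'' := fun h => hfwB'₁ (h ▸ hB''.2)
    rcases hN'chain hB'₁N hB''.1 hne with h | h
    · exact h
    · exact absurd (h hB''.2) hfwB'₁
  obtain ⟨α, x, hfx, hxmem, himgw⟩ := hML z' w
  have hp : (α, w) ∈ Dc w := by
    refine ⟨?_, fun B'' hB'' v hv =>
      UltraAux.hull_subset hu' (hN'balls B'' hB''.1) hB''.2
        (hB'₁sub B'' hB'' hz'B'₁) (himgw v hv)⟩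
    show α ≤ u w w
    rw [(hu.1 w w).2 rfl]; exact le_top
  have hxDw : x ∈ D w := Set.mem_biUnion hp hxmem
  have hB'₁Mx : B'₁ ∈ M x := ⟨hB'₁N, hfx ▸ hz'B'₁⟩
  have hrelx : ∀ y ∈ C, rel x y := by
    intro y hy
    have hMyw : M y ⊆ M w := hMsub w y (hwD y hy)
    have hB'₁y : B'₁ ∉ M y := fun h => hfwB'₁ (hMyw h).2
    refine ⟨?_, hDmono w y (hwD y hy) hxDw⟩
    rw [Set.ssubset_def]
    exact ⟨fun B'' hB'' => hMsub x w hxDw (hMyw hB''),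
      fun h => hB'₁y (h hB'₁Mx)⟩
  have hxC : x ∉ C := fun h => (hrelx x h).1.ne rfl
  have heq : C = insert x C :=
    hmax.2 (hmax.1.insert fun b hb _ => Or.inl (hrelx b hb)) (Set.subset_insert _ _)
  exact hxC (heq ▸ Set.mem_insert x C)
end

section
/- If Y is an immediate ultrametric subspace of Y' and (Y,u) is spherically complete, then Y = Y'. -/
/-- an immediate ultrametric subspace of `Y'` which is spherically complete
must be all of `Y'`. -/
theorem immediate_subspace_eq_univ {Y' : Type*} {Γ' : Type*}
    [LinearOrder Γ'] [OrderTop Γ']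
    (u' : Y' → Y' → Γ') (hu' : IsUltrametric u')
    (Y : Set Y') (hYne : Y.Nonempty)
    (himm : ∀ z' : Y', ∀ y ∈ Y, y ≠ z' → ∃ z ∈ Y, u' y z' < u' z z')
    (hsc : SphericallyComplete (fun a b : Y => u' a b)) :
    Y = Set.univ := by
  obtain ⟨eqtop, tri, symm⟩ := hu'
  ext z'
  simp only [Set.mem_univ, iff_true]
  have key : ∀ y z : Y', u' y z' ≤ u' y z ↔ u' y z' ≤ u' z z' := by
    intro y z
    constructor
    · intro h
      calc u' y z' ≤ min (u' z y) (u' y z') := le_min (by rw [symm z y]; exact h) le_rfl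
        _ ≤ u' z z' := tri y z z'
    · intro h
      calc u' y z' ≤ min (u' y z') (u' z' z) := le_min le_rfl (by rw [symm z' z]; exact h)
        _ ≤ u' y z := tri z' y z
  set N : Set (Set Y) := Set.range (fun y : Y => {z : Y | u' (y:Y') z' ≤ u' (z:Y') z'}) with hN
  have hne : N.Nonempty := ⟨_, ⟨⟨hYne.choose, hYne.choose_spec⟩, rfl⟩⟩
  have hballs : ∀ B ∈ N, IsBall (fun a b : Y => u' a b) B := by
    rintro B ⟨y, rfl⟩
    refine ⟨{(u' (y:Y') z', y)}, Set.singleton_nonempty _, ⟨y, ?_⟩, ?_⟩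
    · rintro p hp
      rw [Set.mem_singleton_iff] at hp
      subst hp
      simp only [closedBall, Set.mem_setOf_eq]
      rw [(eqtop (y:Y') (y:Y')).mpr rfl]
      exact le_top
    · ext z
      simp only [Set.mem_setOf_eq, Set.mem_iUnion, Set.mem_singleton_iff,
        exists_prop, exists_eq_left, closedBall]
      exact (key (y:Y') (z:Y')).symm
  have hchain : IsChain (· ⊆ ·) N := by
    rintro B1 ⟨y1, rfl⟩ B2 ⟨y2, rfl⟩ _
    rcases le_total (u' (y1:Y') z') (u' (y2:Y') z') with h | h
    · right; intro z hz; exact le_trans h hz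
    · left; intro z hz; exact le_trans h hz
  obtain ⟨z, hz⟩ := hsc N hne hballs hchain
  have hzmem : ∀ y : Y, u' (y:Y') z' ≤ u' (z:Y') z' := by
    intro y
    exact hz _ ⟨y, rfl⟩
  by_cases hzz : (z:Y') = z'
  · exact hzz ▸ z.2
  · obtain ⟨w, hwY, hlt⟩ := himm z' z z.2 hzz
    exact absurd (hzmem ⟨w, hwY⟩) (not_le.mpr hlt)
end

section
/- If Y is an ultrametric subspace of Y' and (Y,u) is spherically complete, then Y has the optimal approximation property in Y': for every z' ∈ Y' there is z ∈ Y with u'(z,z') = max{u'(y,z') | y ∈ Y}. -/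
/-- a spherically complete ultrametric subspace has the optimal
approximation property. -/
theorem sphericallyComplete_optimal_approximation {Y' : Type*} {Γ' : Type*}
    [LinearOrder Γ'] [OrderTop Γ']
    (u' : Y' → Y' → Γ') (hu' : IsUltrametric u')
    (Y : Set Y') (hYne : Y.Nonempty)
    (hsc : SphericallyComplete (fun a b : Y => u' a b)) :
    ∀ z' : Y', ∃ z ∈ Y, ∀ y ∈ Y, u' y z' ≤ u' z z' := by
  obtain ⟨hsep, htri, hsymm⟩ := hu'
  intro z'
  set v : Y → Y → Γ' := fun a b => u' a b with hv
  set B : Y → Set Y := fun y => closedBall v (u' y z') y with hB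
  have hmono : ∀ y w : Y, u' y z' ≤ u' w z' → B w ⊆ B y := by
    intro y w h x hx
    have hx' : u' (w : Y') x ≥ u' w z' := hx
    have h1 : u' (y : Y') z' ≤ u' z' x := by
      refine le_trans (le_min ?_ ?_) (htri w z' x)
      · rw [hsymm z' w]; exact h
      · exact le_trans h hx'
    exact le_trans (le_min le_rfl h1) (htri z' y x)
  have hball : ∀ y : Y, IsBall v (B y) := by
    intro y
    refine ⟨{(u' y z', y)}, Set.singleton_nonempty _, ⟨y, ?_⟩, ?_⟩
    · rintro p rfl
      show u' (y : Y') z' ≤ u' y y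
      rw [(hsep (y : Y') y).mpr rfl]
      exact le_top
    · simp [hB]
  have hchain : IsChain (· ⊆ ·) (Set.range B) := by
    rintro _ ⟨y, rfl⟩ _ ⟨w, rfl⟩ _
    rcases le_total (u' (y : Y') z') (u' (w : Y') z') with h | h
    · exact Or.inr (hmono y w h)
    · exact Or.inl (hmono w y h)
  obtain ⟨z, hz⟩ := hsc (Set.range B) (hYne.elim fun y hy => ⟨B ⟨y, hy⟩, ⟨⟨y, hy⟩, rfl⟩⟩)
    (by rintro _ ⟨y, rfl⟩; exact hball y) hchain
  refine ⟨z, z.2, fun y hy => ?_⟩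
  have hzy : u' y z' ≤ u' y z := hz _ ⟨⟨y, hy⟩, rfl⟩
  refine le_trans (le_min ?_ le_rfl) (htri y (z : Y') z')
  rw [hsymm (z : Y') y]; exact hzy
end

section
/- If B is a ball in the direct product of finitely many ultrametric spaces (Y_i,u_i) with the minimum ultrametric, then each projection π_k B is a ball in (Y_k,u_k) and B equals the product of its projections: B = ∏_i π_i B. -/
/-!
A closed ball of the minimum ultrametric is the product of the closed balls of the same radius in
the factors, which gives the projections. Conversely, the closed balls making up a ball share a
point, so in an ultrametric space they are nested: the coordinate witnesses of a point of
`∏ i, π_i B` all lie in the one of smallest radius, which therefore contains the point itself.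
-/

def piMinDist {I : Type*} [Fintype I] {Γ : Type*} [LinearOrder Γ] [OrderTop Γ]
    {Y : I → Type*} (u : ∀ i, Y i → Y i → Γ) (a b : ∀ i, Y i) : Γ :=
  Finset.univ.inf fun i => u i (a i) (b i)

section Ultrametric

variable {Γ : Type*} [LinearOrder Γ] [OrderTop Γ]

namespace IsUltrametric

variable {Y : Type*} {u : Y → Y → Γ}

theorem mem_closedBall_self (hu : IsUltrametric u) (α : Γ) (y : Y) : y ∈ closedBall u α y := by
  simp [closedBall, (hu.1 y y).2 rfl]

theorem closedBall_subset_closedBall (hu : IsUltrametric u) {α β : Γ} (hαβ : α ≤ β) {x y y₀ : Y}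
    (hy : y₀ ∈ closedBall u α y) (hx : y₀ ∈ closedBall u β x) :
    closedBall u β x ⊆ closedBall u α y := by
  intro z hz
  have hyx : α ≤ u y x := by
    have hx' : β ≤ u y₀ x := hu.2.2 x y₀ ▸ hx
    exact (le_min hy (hαβ.trans hx')).trans (hu.2.1 y₀ y x)
  exact (le_min hyx (hαβ.trans hz)).trans (hu.2.1 x y z)

end IsUltrametric

variable {I : Type*} [Fintype I] {Y : I → Type*} {u : ∀ i, Y i → Y i → Γ}

theorem closedBall_piMinDist (α : Γ) (y : ∀ i, Y i) :
    closedBall (piMinDist u) α y = Set.univ.pi fun i => closedBall (u i) α (y i) := by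
  ext z
  simp [closedBall, piMinDist]

theorem image_eval_closedBall_piMinDist (hu : ∀ i, IsUltrametric (u i)) (α : Γ)
    (y : ∀ i, Y i) (k : I) :
    (fun a : ∀ i, Y i => a k) '' closedBall (piMinDist u) α y = closedBall (u k) α (y k) := by
  rw [closedBall_piMinDist]
  exact Set.eval_image_univ_pi ⟨y, fun i _ => (hu i).mem_closedBall_self α (y i)⟩

namespace IsBall

variable {B : Set (∀ i, Y i)}

theorem image_eval (hu : ∀ i, IsUltrametric (u i)) (hB : IsBall (piMinDist u) B) (k : I) :
    IsBall (u k) ((fun a : ∀ i, Y i => a k) '' B) := by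
  obtain ⟨C, hCne, ⟨y₀, hy₀⟩, rfl⟩ := hB
  refine ⟨(fun p => (p.1, p.2 k)) '' C, hCne.image _, ⟨y₀ k, ?_⟩, ?_⟩
  · rintro _ ⟨p, hp, rfl⟩
    exact (closedBall_piMinDist (u := u) p.1 p.2 ▸ hy₀ p hp) k trivial
  · simp only [Set.image_iUnion₂, Set.biUnion_image, image_eval_closedBall_piMinDist hu]

theorem pi_image_eval_subset (hu : ∀ i, IsUltrametric (u i)) (hB : IsBall (piMinDist u) B) :
    Set.univ.pi (fun i => (fun a : ∀ j, Y j => a i) '' B) ⊆ B := by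
  obtain ⟨C, ⟨p₀, hp₀⟩, ⟨y₀, hy₀⟩, rfl⟩ := hB
  simp only [closedBall_piMinDist, Set.mem_univ_pi] at hy₀
  intro z hz
  have hcoord : ∀ i, ∃ p ∈ C, z i ∈ closedBall (u i) p.1 (p.2 i) := fun i => by
    obtain ⟨w, hw, hwz⟩ := hz i trivial
    obtain ⟨p, hp, hwp⟩ := Set.mem_iUnion₂.1 hw
    rw [closedBall_piMinDist, Set.mem_univ_pi] at hwp
    exact ⟨p, hp, hwz ▸ hwp i⟩
  choose p hpC hzp using hcoord
  simp only [Set.mem_iUnion₂, closedBall_piMinDist, Set.mem_univ_pi]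
  cases isEmpty_or_nonempty I
  · exact ⟨p₀, hp₀, isEmptyElim⟩
  obtain ⟨j, -, hj⟩ := Finset.univ.exists_min_image (fun i => (p i).1) Finset.univ_nonempty
  exact ⟨p j, hpC j, fun i => (hu i).closedBall_subset_closedBall (hj i (Finset.mem_univ i))
    (hy₀ _ (hpC j) i) (hy₀ _ (hpC i) i) (hzp i)⟩

end IsBall

end Ultrametric

theorem ball_in_product_general {I : Type*} [Fintype I] {Γ : Type*}
    [LinearOrder Γ] [OrderTop Γ]
    (Y : I → Type*) (u : ∀ i, Y i → Y i → Γ) (hu : ∀ i, IsUltrametric (u i))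
    (B : Set (∀ i, Y i))
    (hB : IsBall (fun a b : ∀ i, Y i => Finset.univ.inf fun i => u i (a i) (b i)) B) :
    (∀ k : I, IsBall (u k) ((fun a : ∀ i, Y i => a k) '' B)) ∧
      B = Set.pi Set.univ (fun i => (fun a : ∀ j, Y j => a i) '' B) := by
  change IsBall (piMinDist u) B at hB
  exact ⟨hB.image_eval hu, (Set.subset_pi_eval_image _ B).antisymm (hB.pi_image_eval_subset hu)⟩

/-- balls in a finite direct product of ultrametric spaces (with the
minimum ultrametric) project to balls and are the product of their projections. -/
theorem ball_in_product {I : Type*} [Fintype I] [Nonempty I] {Γ : Type*}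
    [LinearOrder Γ] [OrderTop Γ]
    (Y : I → Type*) (u : ∀ i, Y i → Y i → Γ) (hu : ∀ i, IsUltrametric (u i))
    (B : Set (∀ i, Y i))
    (hB : IsBall (fun a b : ∀ i, Y i => Finset.univ.inf fun i => u i (a i) (b i)) B) :
    (∀ k : I, IsBall (u k) ((fun a : ∀ i, Y i => a k) '' B)) ∧
      B = Set.pi Set.univ (fun i => (fun a : ∀ j, Y j => a i) '' B) :=
  ball_in_product_general Y u hu B hB
end

section
/- For a map f : G → G' between valued abelian groups with f0 = 0: if f is immediate then for every a' ∈ G'∖{0} there is a ∈ G with v'(a'−fa) > v'a' and such that for all b ∈ G, va ≤ vb implies v'fa ≤ v'fb. Conversely, if f is a group homomorphism satisfying this condition, then f is immediate. -/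
/-- The axioms of a valuation on an abelian group, with values in `Γ` (top element `∞`). -/
def IsGroupVal {G : Type*} [AddCommGroup G] {Γ : Type*} [LinearOrder Γ] [OrderTop Γ]
    (v : G → Γ) : Prop :=
  (∀ a, v a = ⊤ ↔ a = 0) ∧ (∀ a b, min (v a) (v b) ≤ v (a - b))


section Helpers

variable {G : Type*} [AddCommGroup G] {Γ : Type*} [LinearOrder Γ] [OrderTop Γ]
  {v : G → Γ}

lemma IsGroupVal.zero (hv : IsGroupVal v) : v 0 = ⊤ := (hv.1 0).mpr rfl

lemma IsGroupVal.neg (hv : IsGroupVal v) (a : G) : v (-a) = v a := by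
  have key : ∀ x : G, v x ≤ v (-x) := by
    intro x
    have h := hv.2 0 x
    rw [zero_sub] at h
    simpa [hv.zero] using h
  have h1 := key a
  have h2 := key (-a)
  rw [neg_neg] at h2
  exact le_antisymm h2 h1

lemma IsGroupVal.sub_comm (hv : IsGroupVal v) (a b : G) : v (a - b) = v (b - a) := by
  rw [← neg_sub, hv.neg]

lemma IsGroupVal.eq_of_lt (hv : IsGroupVal v) {a b : G} (h : v a < v (a - b)) :
    v b = v a := by
  have h1 : v a ≤ v b := by
    have hab := hv.2 a (a - b)
    rw [sub_sub_cancel, min_eq_left h.le] at hab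
    exact hab
  have h2 : v b ≤ v a := by
    by_contra hc
    push_neg at hc
    have h3 := hv.2 b (b - a)
    rw [sub_sub_cancel] at h3
    have hba : v (b - a) = v (a - b) := hv.sub_comm b a
    exact absurd h3 (not_le.mpr (lt_min hc (hba ▸ h)))
  exact le_antisymm h2 h1

end Helpers

/-- characterization of immediate maps `f : G → G'` with `f 0 = 0` between
valued abelian groups; the converse holds for group homomorphisms. -/
theorem immediate_iff_IH {G G' : Type*} [AddCommGroup G] [AddCommGroup G']
    {Γ Γ' : Type*} [LinearOrder Γ] [OrderTop Γ] [LinearOrder Γ'] [OrderTop Γ']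
    (v : G → Γ) (v' : G' → Γ') (hv : IsGroupVal v) (hv' : IsGroupVal v')
    (f : G → G') (hf0 : f 0 = 0) :
    (Immediate (fun a b : G => v (a - b)) (fun a b : G' => v' (a - b)) f →
      ∀ a' : G', a' ≠ 0 → ∃ a : G,
        v' a' < v' (a' - f a) ∧ ∀ b : G, v a ≤ v b → v' (f a) ≤ v' (f b)) ∧
    ((∀ x y : G, f (x + y) = f x + f y) →
      (∀ a' : G', a' ≠ 0 → ∃ a : G,
        v' a' < v' (a' - f a) ∧ ∀ b : G, v a ≤ v b → v' (f a) ≤ v' (f b)) →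
      Immediate (fun a b : G => v (a - b)) (fun a b : G' => v' (a - b)) f) := by
  constructor
  · -- forward direction
    intro himm a' ha'
    have h0 : f 0 ≠ a' := by rw [hf0]; exact fun h => ha' h.symm
    obtain ⟨z, hlt, hsub⟩ := himm a' 0 h0
    simp only [hf0] at hlt hsub
    -- hlt : v' (0 - a') < v' (f z - a')
    have e1 : v' ((0 : G') - a') = v' a' := by rw [zero_sub, hv'.neg]
    have e2 : v' (f z - a') = v' (a' - f z) := hv'.sub_comm _ _
    rw [e1, e2] at hlt
    have hfz : v' (f z) = v' a' := hv'.eq_of_lt hlt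
    refine ⟨z, hlt, fun b hb => ?_⟩
    have hbmem : b ∈ smallBall (fun a b : G => v (a - b)) 0 z := by
      simp only [smallBall, closedBall, Set.mem_setOf_eq, zero_sub, hv.neg]
      exact hb
    have := hsub ⟨b, hbmem, rfl⟩
    simp only [smallBall, closedBall, Set.mem_setOf_eq, zero_sub, hv'.neg] at this
    rw [hfz]
    exact this
  · -- converse direction
    intro hadd hIH z' y hy
    have hsubf : ∀ x y : G, f (x - y) = f x - f y := by
      intro x y
      have h := hadd (x - y) y
      rw [sub_add_cancel] at h
      exact eq_sub_of_add_eq h.symm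
    set a' := z' - f y with ha'def
    have ha' : a' ≠ 0 := sub_ne_zero.mpr (fun h => hy h.symm)
    obtain ⟨a, h1, h2⟩ := hIH a' ha'
    have hfa : v' (f a) = v' a' := hv'.eq_of_lt h1
    refine ⟨y + a, ?_, ?_⟩
    · have e1 : v' (f y - z') = v' a' := by
        rw [hv'.sub_comm]
      have e2 : f (y + a) - z' = f a - a' := by
        rw [hadd]; abel_nf; rw [ha'def]; abel
      show v' (f y - z') < v' (f (y + a) - z')
      rw [e1, e2, hv'.sub_comm (f a) a']
      exact h1
    · rintro c ⟨b, hb, rfl⟩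
      simp only [smallBall, closedBall, Set.mem_setOf_eq] at hb ⊢
      -- hb : v (y - (y + a)) ≤ v (y - b)
      have hva : v (y - (y + a)) = v a := by
        have : y - (y + a) = -a := by abel
        rw [this, hv.neg]
      rw [hva] at hb
      have := h2 (y - b) hb
      rw [hfa, hsubf] at this
      calc v' (f y - z') = v' a' := by rw [hv'.sub_comm]
        _ ≤ v' (f y - f b) := this
end

section
/- If f : G → G' is a group homomorphism between valued abelian groups satisfying (IH1) and (IH2), and (G,v) is spherically complete, then f is surjective and (G',v') is spherically complete. -/
namespace HomIHProof

variable {G : Type*} [AddCommGroup G] {Γ : Type*} [LinearOrder Γ] [OrderTop Γ]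

lemma val_zero {v : G → Γ} (hv : IsGroupVal v) : v 0 = ⊤ := (hv.1 0).2 rfl

lemma val_neg {v : G → Γ} (hv : IsGroupVal v) (a : G) : v (-a) = v a := by
  have h : ∀ x : G, v x ≤ v (-x) := by
    intro x
    have h2 := hv.2 0 x
    rw [zero_sub] at h2
    calc v x = min (v 0) (v x) := by rw [val_zero hv]; exact (min_eq_right le_top).symm
    _ ≤ v (-x) := h2
  exact le_antisymm (by simpa using h (-a)) (h a)

lemma val_sub_comm {v : G → Γ} (hv : IsGroupVal v) (a b : G) : v (a - b) = v (b - a) := by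
  rw [← neg_sub b a, val_neg hv]

lemma val_tri {v : G → Γ} (hv : IsGroupVal v) (a b c : G) :
    min (v (a - b)) (v (b - c)) ≤ v (a - c) := by
  have h := hv.2 (a - b) (c - b)
  rw [sub_sub_sub_cancel_right, val_sub_comm hv c b] at h
  exact h

lemma val_eq_of_lt {v : G → Γ} (hv : IsGroupVal v) {s t : G} (h : v s < v (s - t)) :
    v t = v s := by
  have h1 : v s ≤ v t := by
    have h2 := hv.2 s (s - t)
    rw [sub_sub_cancel, min_eq_left h.le] at h2
    exact h2
  have h2 : v t ≤ v s := by
    by_contra hc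
    push_neg at hc
    have h3 := hv.2 t (t - s)
    rw [sub_sub_cancel] at h3
    have h4 : v s < v (t - s) := by rw [val_sub_comm hv t s]; exact h
    exact absurd h3 (not_le.2 (lt_min hc h4))
  exact le_antisymm h2 h1


variable {G G' : Type*} [AddCommGroup G] [AddCommGroup G']
  {Γ Γ' : Type*} [LinearOrder Γ] [OrderTop Γ] [LinearOrder Γ'] [OrderTop Γ']

lemma map_zero' {f : G → G'} (hadd : ∀ x y : G, f (x + y) = f x + f y) : f 0 = 0 := by
  have h := hadd 0 0
  rw [add_zero] at h
  have h2 : f 0 + 0 = f 0 + f 0 := by rw [add_zero]; exact h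
  exact (add_left_cancel h2).symm

lemma map_sub' {f : G → G'} (hadd : ∀ x y : G, f (x + y) = f x + f y) (a b : G) :
    f (a - b) = f a - f b := by
  have h := hadd (a - b) b
  rw [sub_add_cancel] at h
  rw [h]; abel

lemma exists_good_preimage
    {v : G → Γ} {v' : G' → Γ'} {f : G → G'}
    (hv : IsGroupVal v) (hv' : IsGroupVal v')
    (hadd : ∀ x y : G, f (x + y) = f x + f y)
    (hIH : ∀ a' : G', a' ≠ 0 → ∃ a : G,
      v' a' < v' (a' - f a) ∧ ∀ b : G, v a ≤ v b → v' (f a) ≤ v' (f b))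
    (hsc : SphericallyComplete (fun a b : G => v (a - b)))
    {a' : G'} (ha' : a' ≠ 0) :
    ∃ c h : G, (∀ d, v c ≤ v d → v' (f c) ≤ v' (f d)) ∧
      v' (f c) = v' a' ∧ v c ≤ v h ∧ f h = a' := by
  classical
  have f0 : f 0 = 0 := map_zero' hadd
  set r : G → Γ' := fun a => v' (a' - f a) with hr
  have hrtop : ∀ a : G, f a = a' → r a = ⊤ := by
    intro a h
    simp only [hr]
    rw [h, sub_self, val_zero hv']
  have hrne : ∀ a : G, r a ≠ ⊤ → f a ≠ a' := fun a h h2 => h (hrtop a h2)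
  set c : G → G := fun a => if h : a' - f a ≠ 0 then (hIH _ h).choose else 0 with hc
  have hcspec : ∀ a : G, f a ≠ a' →
      v' (a' - f a) < v' ((a' - f a) - f (c a)) ∧
      ∀ b : G, v (c a) ≤ v b → v' (f (c a)) ≤ v' (f b) := by
    intro a ha
    have hne : a' - f a ≠ 0 := sub_ne_zero.2 (Ne.symm ha)
    simp only [hc, dif_pos hne]
    exact (hIH _ hne).choose_spec
  have hgood : ∀ a : G, f a ≠ a' → ∀ b : G, v (c a) ≤ v b → v' (f (c a)) ≤ v' (f b) :=
    fun a ha => (hcspec a ha).2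
  have hstep : ∀ a : G, f a ≠ a' → r a < r (a + c a) := by
    intro a ha
    have h := (hcspec a ha).1
    have h2 : (a' - f a) - f (c a) = a' - f (a + c a) := by rw [hadd, sub_sub]
    rw [h2] at h
    exact h
  have hval : ∀ a : G, f a ≠ a' → v' (f (c a)) = r a := by
    intro a ha
    exact val_eq_of_lt hv' (hcspec a ha).1
  have hlt : ∀ a b : G, f b ≠ a' → r a < r b → v (c a) < v (c b) := by
    intro a b hb hab
    have ha : f a ≠ a' := hrne a (ne_top_of_lt hab)
    by_contra hle
    push_neg at hle
    have h := hgood b hb (c a) hle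
    rw [hval a ha, hval b hb] at h
    exact absurd hab (not_lt.2 h)
  set S : G → G → Prop := fun a b => r a < r b ∧ v (c a) ≤ v (b - a) with hS
  have htrans : ∀ a b e : G, f b ≠ a' → S a b → S b e → S a e := by
    intro a b e hb hab hbe
    refine ⟨hab.1.trans hbe.1, ?_⟩
    have h1 : v (c a) < v (c b) := hlt a b hb hab.1
    have h2 : min (v (e - b)) (v (b - a)) ≤ v (e - a) := val_tri hv e b a
    exact (le_min (h1.le.trans hbe.2) hab.2).trans h2
  have f0ne : f 0 ≠ a' := by rw [f0]; exact Ne.symm ha'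
  suffices hfind : ∃ h : G, v (c 0) ≤ v h ∧ f h = a' by
    obtain ⟨h, h1, h2⟩ := hfind
    refine ⟨c 0, h, hgood 0 f0ne, ?_, h1, h2⟩
    rw [hval 0 f0ne]
    simp only [hr, f0, sub_zero]
  by_contra hcon
  push_neg at hcon
  obtain ⟨T, hT, hsub⟩ := IsChain.exists_maxChain (IsChain.singleton (r := S) (a := 0))
  have h0T : (0 : G) ∈ T := hsub rfl
  have hmemne : ∀ a ∈ T, f a ≠ a' := by
    intro a haT hfa
    rcases eq_or_ne a 0 with rfl | hne
    · exact f0ne hfa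
    · rcases hT.1 h0T haT (Ne.symm hne) with h | h
      · refine hcon a ?_ hfa
        have h2 := h.2
        rw [sub_zero] at h2
        exact h2
      · exact absurd h.1 (by rw [hrtop a hfa]; exact not_top_lt)
  by_cases htop : ∃ a ∈ T, ∀ b ∈ T, ¬ S a b
  · obtain ⟨a, haT, hamax⟩ := htop
    have ha := hmemne a haT
    have hSab : S a (a + c a) := by
      refine ⟨hstep a ha, ?_⟩
      rw [add_sub_cancel_left]
    have hbT : (a + c a) ∉ T := fun hbT => hamax _ hbT hSab
    have hSy : ∀ y ∈ T, S y (a + c a) := by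
      intro y hyT
      rcases eq_or_ne y a with rfl | hya
      · exact hSab
      · rcases hT.1 hyT haT hya with h | h
        · exact htrans y a _ ha h hSab
        · exact absurd h (hamax y hyT)
    have heq := hT.2 (hT.1.insert fun y hyT _ => Or.inr (hSy y hyT))
      (Set.subset_insert (a + c a) T)
    exact hbT (heq ▸ Set.mem_insert (a + c a) T)
  · push_neg at htop
    set u : G → G → Γ := fun x y => v (x - y) with hu
    set NB : Set (Set G) := (fun a => closedBall u (v (c a)) a) '' T with hNB
    have hball : ∀ B ∈ NB, IsBall u B := by
      rintro B ⟨a, haT, rfl⟩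
      refine ⟨{(v (c a), a)}, Set.singleton_nonempty _, ⟨a, ?_⟩, ?_⟩
      · rintro p hp
        rw [Set.mem_singleton_iff] at hp
        subst hp
        show v (c a) ≤ u a a
        simp only [hu, sub_self, val_zero hv]
        exact le_top
      · rw [Set.biUnion_singleton]
    have hsubball : ∀ a b : G, f b ≠ a' → S a b →
        closedBall u (v (c b)) b ⊆ closedBall u (v (c a)) a := by
      intro a b hbne hab z hz
      have hz' : v (c b) ≤ v (b - z) := hz
      have h1 : v (c a) ≤ v (a - b) := by rw [val_sub_comm hv]; exact hab.2
      have h2 : v (c a) ≤ v (b - z) := ((hlt a b hbne hab.1).le).trans hz'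
      exact (le_min h1 h2).trans (val_tri hv a b z)
    have hchainNB : IsChain (· ⊆ ·) NB := by
      rintro B₁ ⟨a, haT, rfl⟩ B₂ ⟨b, hbT, rfl⟩ hne
      have hab : a ≠ b := fun h => hne (by rw [h])
      rcases hT.1 haT hbT hab with h | h
      · exact Or.inr (hsubball a b (hmemne b hbT) h)
      · exact Or.inl (hsubball b a (hmemne a haT) h)
    obtain ⟨x, hx⟩ := hsc NB ⟨_, ⟨0, h0T, rfl⟩⟩ hball hchainNB
    have hxmem : ∀ a ∈ T, v (c a) ≤ v (a - x) := by
      intro a haT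
      exact Set.mem_sInter.1 hx _ ⟨a, haT, rfl⟩
    have hSx : ∀ a ∈ T, S a x := by
      intro a haT
      obtain ⟨b, hbT, hab⟩ := htop a haT
      have hbne := hmemne b hbT
      constructor
      · have h1 : v' (f (c b)) ≤ v' (f (x - b)) :=
          hgood b hbne _ (by rw [val_sub_comm hv]; exact hxmem b hbT)
        have h2 : (a' - f b) - f (x - b) = a' - f x := by
          rw [map_sub' hadd, sub_sub_sub_cancel_right]
        have h3 : min (v' (a' - f b)) (v' (f (x - b))) ≤ v' (a' - f x) := by
          rw [← h2]; exact hv'.2 (a' - f b) (f (x - b))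
        have h4 : r b ≤ r x :=
          le_trans (le_min le_rfl (by rw [← hval b hbne]; exact h1)) h3
        exact lt_of_lt_of_le hab.1 h4
      · rw [val_sub_comm hv]; exact hxmem a haT
    have hxT : x ∉ T := by
      intro hxT
      obtain ⟨b, hbT, hxb⟩ := htop x hxT
      exact absurd (hSx b hbT).1 (not_lt.2 hxb.1.le)
    have heq := hT.2 (hT.1.insert fun y hyT _ => Or.inr (hSx y hyT)) (Set.subset_insert x T)
    exact hxT (heq ▸ Set.mem_insert x T)

lemma isBall_nonempty {Y : Type*} {Δ : Type*} [LinearOrder Δ] [OrderTop Δ]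
    {u : Y → Y → Δ} {B : Set Y} (hB : IsBall u B) : B.Nonempty := by
  obtain ⟨C, ⟨q, hq⟩, ⟨y₀, hy₀⟩, rfl⟩ := hB
  exact ⟨y₀, Set.mem_biUnion hq (hy₀ q hq)⟩

lemma ball_recenter {v' : G' → Γ'} (hv' : IsGroupVal v') {B : Set G'}
    (hB : IsBall (fun a b : G' => v' (a - b)) B) {p x : G'} (hp : p ∈ B) (hx : x ∈ B) :
    ∃ η, η ≤ v' (p - x) ∧ ∀ z, η ≤ v' (p - z) → z ∈ B := by
  obtain ⟨C, hCne, ⟨y₀, hy₀⟩, rfl⟩ := hB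
  rw [Set.mem_iUnion₂] at hp hx
  obtain ⟨q, hqC, hq⟩ := hp
  obtain ⟨q', hq'C, hq'⟩ := hx
  have hq1 : q.1 ≤ v' (q.2 - p) := hq
  have hq'1 : q'.1 ≤ v' (q'.2 - x) := hq'
  have hqy : q.1 ≤ v' (q.2 - y₀) := hy₀ q hqC
  have hq'y : q'.1 ≤ v' (q'.2 - y₀) := hy₀ q' hq'C
  have h1 : q.1 ≤ v' (y₀ - p) :=
    (le_min (by rw [val_sub_comm hv' y₀ q.2]; exact hqy) hq1).trans (val_tri hv' y₀ q.2 p)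
  have h2 : q'.1 ≤ v' (y₀ - x) :=
    (le_min (by rw [val_sub_comm hv' y₀ q'.2]; exact hq'y) hq'1).trans (val_tri hv' y₀ q'.2 x)
  refine ⟨min q'.1 q.1, ?_, ?_⟩
  · refine le_trans (le_min ?_ ?_) (val_tri hv' p y₀ x)
    · rw [val_sub_comm hv' p y₀]; exact (min_le_right _ _).trans h1
    · exact (min_le_left _ _).trans h2
  · intro z hz
    have hyz : min q'.1 q.1 ≤ v' (y₀ - z) :=
      (le_min ((min_le_right _ _).trans h1) hz).trans (val_tri hv' y₀ p z)
    rcases le_total q'.1 q.1 with hle | hle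
    · refine Set.mem_biUnion hq'C ?_
      show q'.1 ≤ v' (q'.2 - z)
      refine le_trans (le_min hq'y ?_) (val_tri hv' q'.2 y₀ z)
      rw [min_eq_left hle] at hyz
      exact hyz
    · refine Set.mem_biUnion hqC ?_
      show q.1 ≤ v' (q.2 - z)
      refine le_trans (le_min hqy ?_) (val_tri hv' q.2 y₀ z)
      rw [min_eq_right hle] at hyz
      exact hyz

lemma ball_const_dist {v' : G' → Γ'} (hv' : IsGroupVal v') {B : Set G'}
    (hB : IsBall (fun a b : G' => v' (a - b)) B) {t p q₀ : G'}
    (ht : t ∉ B) (hp : p ∈ B) (hq : q₀ ∈ B) :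
    v' (t - p) = v' (t - q₀) := by
  obtain ⟨η, hη₁, hη₂⟩ := ball_recenter hv' hB hp hq
  have hpt : v' (p - t) < η := by
    by_contra h
    push_neg at h
    exact ht (hη₂ t h)
  have hlt : v' (p - t) < v' (p - q₀) := lt_of_lt_of_le hpt hη₁
  have h1 : v' (t - p) ≤ v' (t - q₀) := by
    have h := val_tri hv' t p q₀
    rwa [min_eq_left (le_of_lt (by rw [val_sub_comm hv' t p]; exact hlt))] at h
  have h2 : v' (t - q₀) ≤ v' (t - p) := by
    by_contra h
    push_neg at h
    have h3 := val_tri hv' t q₀ p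
    have h4 : v' (t - p) < v' (q₀ - p) := by
      rw [val_sub_comm hv' q₀ p, val_sub_comm hv' t p]
      exact hlt
    exact absurd h3 (not_le.2 (lt_min h h4))
  exact le_antisymm h1 h2

lemma target_spherically_complete
    {v : G → Γ} {v' : G' → Γ'} {f : G → G'}
    (hv : IsGroupVal v) (hv' : IsGroupVal v')
    (hadd : ∀ x y : G, f (x + y) = f x + f y)
    (hIH : ∀ a' : G', a' ≠ 0 → ∃ a : G,
      v' a' < v' (a' - f a) ∧ ∀ b : G, v a ≤ v b → v' (f a) ≤ v' (f b))
    (hsc : SphericallyComplete (fun a b : G => v (a - b))) :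
    SphericallyComplete (fun a b : G' => v' (a - b)) := by
  classical
  have f0 : f 0 = 0 := map_zero' hadd
  intro N hNne hballs hchain
  by_contra hcon
  rw [Set.not_nonempty_iff_eq_empty] at hcon
  have hempty : ∀ x' : G', ∃ B ∈ N, x' ∉ B := by
    intro x'
    by_contra h
    push_neg at h
    have hmem : x' ∈ ⋂₀ N := Set.mem_sInter.2 h
    rw [hcon] at hmem
    exact hmem
  have hex : ∀ x' : G', ∃ p : Set G' × G', p.1 ∈ N ∧ x' ∉ p.1 ∧ p.2 ∈ p.1 := by
    intro x'
    obtain ⟨B, hBN, hxB⟩ := hempty x'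
    obtain ⟨p, hp⟩ := isBall_nonempty (hballs B hBN)
    exact ⟨(B, p), hBN, hxB, hp⟩
  set BB : G' → Set G' := fun x' => (hex x').choose.1 with hBB
  set pp : G' → G' := fun x' => (hex x').choose.2 with hpp
  have hBBN : ∀ x', BB x' ∈ N := fun x' => (hex x').choose_spec.1
  have hxBB : ∀ x', x' ∉ BB x' := fun x' => (hex x').choose_spec.2.1
  have hppBB : ∀ x', pp x' ∈ BB x' := fun x' => (hex x').choose_spec.2.2
  set δ : G' → Γ' := fun x' => v' (x' - pp x') with hδ
  have L1 : ∀ (x' : G') (B : Set G'), B ∈ N → x' ∉ B → ∀ p ∈ B, v' (x' - p) = δ x' := by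
    intro x' B hBN hxB p hpB
    rcases eq_or_ne B (BB x') with rfl | hne
    · exact ball_const_dist hv' (hballs _ hBN) hxB hpB (hppBB x')
    · rcases hchain hBN (hBBN x') hne with h | h
      · exact ball_const_dist hv' (hballs _ (hBBN x')) (hxBB x') (h hpB) (hppBB x')
      · exact ball_const_dist hv' (hballs B hBN) hxB hpB (h (hppBB x'))
  have L2 : ∀ (x' : G') (B : Set G'), B ∈ N → x' ∈ B →
      ∀ z, δ x' ≤ v' (x' - z) → z ∈ B := by
    intro x' B hBN hxB z hz
    have hne : BB x' ≠ B := fun h => hxBB x' (h.symm ▸ hxB)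
    have hsub : BB x' ⊆ B := by
      rcases hchain (hBBN x') hBN hne with h | h
      · exact h
      · exact absurd (h hxB) (hxBB x')
    obtain ⟨η, hη₁, hη₂⟩ := ball_recenter hv' (hballs B hBN) hxB (hsub (hppBB x'))
    exact hη₂ z (le_trans hη₁ hz)
  set Good : G → Prop := fun cc => ∀ d, v cc ≤ v d → v' (f cc) ≤ v' (f d) with hGood
  set W : G → Set (Set G') := fun b => {B | B ∈ N ∧ f b ∈ B} with hW
  set Dm : G → G → Prop :=
    fun b₁ b₂ => ∃ cc, Good cc ∧ δ (f b₁) ≤ v' (f cc) ∧ v cc ≤ v (b₂ - b₁) with hDm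
  set S : G → G → Prop := fun b₁ b₂ => W b₁ ⊂ W b₂ ∧ Dm b₁ b₂ with hS
  have good_zero : Good 0 := by
    intro d hd
    rw [val_zero hv, top_le_iff] at hd
    rw [(hv.1 d).1 hd]
  have L3 : ∀ b₁ b₂ : G, Dm b₁ b₂ → W b₁ ⊆ W b₂ := by
    rintro b₁ b₂ ⟨cc, hg, hlev, hvc⟩ B hBW
    obtain ⟨hBN, hfB⟩ := hBW
    refine ⟨hBN, ?_⟩
    have h1 : v' (f cc) ≤ v' (f (b₂ - b₁)) := hg _ hvc
    have h2 : δ (f b₁) ≤ v' (f b₁ - f b₂) := by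
      rw [map_sub' hadd] at h1
      calc δ (f b₁) ≤ v' (f cc) := hlev
      _ ≤ v' (f b₂ - f b₁) := h1
      _ = v' (f b₁ - f b₂) := val_sub_comm hv' _ _
    exact L2 (f b₁) B hBN hfB (f b₂) h2
  have L4 : ∀ b₁ b₂ : G, Dm b₁ b₂ → W b₁ ⊂ W b₂ → δ (f b₁) ≤ δ (f b₂) := by
    intro b₁ b₂ hD hWlt
    obtain ⟨Bs, hBs2, hBs1⟩ := Set.exists_of_ssubset hWlt
    have hBsN : Bs ∈ N := hBs2.1
    have hfb₂ : f b₂ ∈ Bs := hBs2.2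
    have hfb₁ : f b₁ ∉ Bs := fun h => hBs1 ⟨hBsN, h⟩
    have hd1 : v' (f b₁ - f b₂) = δ (f b₁) := L1 (f b₁) Bs hBsN hfb₁ (f b₂) hfb₂
    have hB₂Bs : BB (f b₂) ⊆ Bs := by
      have hne : BB (f b₂) ≠ Bs := fun h => (hxBB (f b₂)) (h ▸ hfb₂)
      rcases hchain (hBBN (f b₂)) hBsN hne with h | h
      · exact h
      · exact absurd (h hfb₂) (hxBB (f b₂))
    have hp₂ : pp (f b₂) ∈ Bs := hB₂Bs (hppBB (f b₂))
    have hd2 : v' (f b₁ - pp (f b₂)) = δ (f b₁) := L1 (f b₁) Bs hBsN hfb₁ _ hp₂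
    have h3 := val_tri hv' (f b₂) (f b₁) (pp (f b₂))
    rw [val_sub_comm hv' (f b₂) (f b₁), hd1, hd2, min_self] at h3
    exact h3
  have Dsub : ∀ a b z : G, S a b → Dm b z → Dm a z := by
    rintro a b z ⟨hWlt, c₁, hg₁, hl₁, hv₁⟩ ⟨c₂, hg₂, hl₂, hv₂⟩
    have hδab : δ (f a) ≤ δ (f b) := L4 a b ⟨c₁, hg₁, hl₁, hv₁⟩ hWlt
    have htri : min (v (z - b)) (v (b - a)) ≤ v (z - a) := val_tri hv z b a
    rcases le_total (v c₁) (v c₂) with h | h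
    · exact ⟨c₁, hg₁, hl₁, le_trans (le_min (h.trans hv₂) hv₁) htri⟩
    · exact ⟨c₂, hg₂, hδab.trans hl₂, le_trans (le_min hv₂ (h.trans hv₁)) htri⟩
  have htrans : ∀ a b e : G, S a b → S b e → S a e := fun a b e hab hbe =>
    ⟨hab.1.trans hbe.1, Dsub a b e hab hbe.2⟩
  have L6 : ∀ b₁ : G, ∃ b₂, S b₁ b₂ := by
    intro b₁
    have hne : pp (f b₁) - f b₁ ≠ 0 := by
      intro h
      rw [sub_eq_zero] at h
      have h2 := hppBB (f b₁)
      rw [h] at h2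
      exact hxBB (f b₁) h2
    obtain ⟨cc, h, hg, hvalcc, hvch, hfh⟩ := exists_good_preimage hv hv' hadd hIH hsc hne
    have hfb₂ : f (b₁ + h) = pp (f b₁) := by rw [hadd, hfh]; abel
    have hlev : δ (f b₁) ≤ v' (f cc) := by
      rw [hvalcc, val_sub_comm hv' (pp (f b₁)) (f b₁)]
    have hDm : Dm b₁ (b₁ + h) := ⟨cc, hg, hlev, by rw [add_sub_cancel_left]; exact hvch⟩
    refine ⟨b₁ + h, ?_, hDm⟩
    rw [Set.ssubset_def]
    refine ⟨L3 _ _ hDm, fun hsup => ?_⟩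
    have hmem : BB (f b₁) ∈ W (b₁ + h) := ⟨hBBN (f b₁), hfb₂ ▸ hppBB (f b₁)⟩
    exact hxBB (f b₁) (hsup hmem).2
  obtain ⟨T, hT, hsub⟩ := IsChain.exists_maxChain (IsChain.singleton (r := S) (a := (0 : G)))
  have h0T : (0 : G) ∈ T := hsub rfl
  by_cases htop : ∃ a ∈ T, ∀ b ∈ T, ¬ S a b
  · obtain ⟨a, haT, hamax⟩ := htop
    obtain ⟨b, hSab⟩ := L6 a
    have hSy : ∀ y ∈ T, S y b := by
      intro y hyT
      rcases eq_or_ne y a with rfl | hya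
      · exact hSab
      · rcases hT.1 hyT haT hya with hh | hh
        · exact htrans y a b hh hSab
        · exact absurd hh (hamax y hyT)
    have hbT : b ∉ T := fun hbT => hamax b hbT hSab
    have heq := hT.2 (hT.1.insert fun y hyT _ => Or.inr (hSy y hyT)) (Set.subset_insert b T)
    exact hbT (heq ▸ Set.mem_insert b T)
  · push_neg at htop
    set DSet : G → Set G := fun a => {z | Dm a z} with hDSet
    have hballD : ∀ a : G, IsBall (fun x y : G => v (x - y)) (DSet a) := by
      intro a
      refine ⟨(fun cc => (v cc, a)) '' {cc | Good cc ∧ δ (f a) ≤ v' (f cc)},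
        ⟨(v 0, a), ⟨0, ⟨good_zero, by rw [f0, val_zero hv']; exact le_top⟩, rfl⟩⟩,
        ⟨a, ?_⟩, ?_⟩
      · rintro p ⟨cc, _, rfl⟩
        show v cc ≤ v (a - a)
        rw [sub_self, val_zero hv]
        exact le_top
      · ext z
        simp only [Set.mem_iUnion, Set.mem_image, Set.mem_setOf_eq]
        constructor
        · rintro ⟨cc, hg, hlev, hvc⟩
          refine ⟨(v cc, a), ⟨cc, ⟨hg, hlev⟩, rfl⟩, ?_⟩
          show v cc ≤ v (a - z)
          rw [val_sub_comm hv]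
          exact hvc
        · rintro ⟨p, ⟨cc, ⟨hg, hlev⟩, rfl⟩, hz⟩
          have hz' : v cc ≤ v (a - z) := hz
          exact ⟨cc, hg, hlev, by rw [val_sub_comm hv z a]; exact hz'⟩
    have hDsub : ∀ a b : G, S a b → DSet b ⊆ DSet a := fun a b hab z hz => Dsub a b z hab hz
    set NB : Set (Set G) := DSet '' T with hNB
    have hchainNB : IsChain (· ⊆ ·) NB := by
      rintro B₁ ⟨a, haT, rfl⟩ B₂ ⟨b, hbT, rfl⟩ hne
      have hab : a ≠ b := fun h => hne (h ▸ rfl)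
      rcases hT.1 haT hbT hab with h | h
      · exact Or.inr (hDsub a b h)
      · exact Or.inl (hDsub b a h)
    obtain ⟨x, hx⟩ := hsc NB ⟨_, ⟨0, h0T, rfl⟩⟩ (by rintro B ⟨a, _, rfl⟩; exact hballD a)
      hchainNB
    have hxD : ∀ a ∈ T, Dm a x := fun a haT => Set.mem_sInter.1 hx _ ⟨a, haT, rfl⟩
    have hSx : ∀ a ∈ T, S a x := by
      intro a haT
      obtain ⟨b, hbT, hab⟩ := htop a haT
      refine ⟨?_, hxD a haT⟩
      exact lt_of_lt_of_le hab.1 (L3 b x (hxD b hbT))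
    have hxT : x ∉ T := by
      intro hxT
      obtain ⟨b, hbT, hxb⟩ := htop x hxT
      have h1 := (hSx b hbT).1
      have h2 := hxb.1
      exact absurd (h1.trans h2) (ssubset_irrefl _)
    have heq := hT.2 (hT.1.insert fun y hyT _ => Or.inr (hSx y hyT)) (Set.subset_insert x T)
    exact hxT (heq ▸ Set.mem_insert x T)

end HomIHProof

open HomIHProof in
/-- the Additive Main Theorem: a group homomorphism satisfying (IH1) and
(IH2) on a spherically complete valued abelian group is surjective, and the target is
spherically complete. -/
theorem hom_IH_surjective {G G' : Type*} [AddCommGroup G] [AddCommGroup G']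
    {Γ Γ' : Type*} [LinearOrder Γ] [OrderTop Γ] [LinearOrder Γ'] [OrderTop Γ']
    (v : G → Γ) (v' : G' → Γ') (hv : IsGroupVal v) (hv' : IsGroupVal v')
    (f : G → G') (hadd : ∀ x y : G, f (x + y) = f x + f y)
    (hIH : ∀ a' : G', a' ≠ 0 → ∃ a : G,
      v' a' < v' (a' - f a) ∧ ∀ b : G, v a ≤ v b → v' (f a) ≤ v' (f b))
    (hsc : SphericallyComplete (fun a b : G => v (a - b))) :
    Function.Surjective f ∧ SphericallyComplete (fun a b : G' => v' (a - b)) := by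
  constructor
  · intro a'
    rcases eq_or_ne a' 0 with rfl | h
    · exact ⟨0, map_zero' hadd⟩
    · obtain ⟨c, hpre, _, _, _, hfh⟩ := exists_good_preimage hv hv' hadd hIH hsc h
      exact ⟨hpre, hfh⟩
  · exact target_spherically_complete hv hv' hadd hIH hsc
end

section
/- Let f, f̃ : G → G' be group homomorphisms between valued abelian groups such that for all a ∈ G, either v'(f̃a − fa) > v'fa or f̃a = fa = 0. If f is immediate, then f̃ is immediate. -/
/-- if `f` is an immediate homomorphism and `f̃` is a homomorphism with
`v'(f̃a − fa) > v'(fa)` or `f̃a = fa = 0` for all `a`, then `f̃` is immediate. -/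
theorem immediate_of_close {G G' : Type*} [AddCommGroup G] [AddCommGroup G']
    {Γ Γ' : Type*} [LinearOrder Γ] [OrderTop Γ] [LinearOrder Γ'] [OrderTop Γ']
    (v : G → Γ) (v' : G' → Γ') (hv : IsGroupVal v) (hv' : IsGroupVal v')
    (f g : G → G')
    (hf : ∀ x y : G, f (x + y) = f x + f y)
    (hg : ∀ x y : G, g (x + y) = g x + g y)
    (hclose : ∀ a : G, v' (f a) < v' (g a - f a) ∨ (g a = f a ∧ f a = 0))
    (himm : Immediate (fun a b : G => v (a - b)) (fun a b : G' => v' (a - b)) f) :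
    Immediate (fun a b : G => v (a - b)) (fun a b : G' => v' (a - b)) g := by
  obtain ⟨hv'1, hv'2⟩ := hv'
  have hv'0 : v' 0 = ⊤ := (hv'1 0).2 rfl
  have hvneg : ∀ a, v' (-a) = v' a := by
    intro a
    have h1 := hv'2 0 a
    have h2 := hv'2 0 (-a)
    simp [hv'0] at h1 h2
    exact le_antisymm h2 h1
  have hadd : ∀ a b, min (v' a) (v' b) ≤ v' (a + b) := by
    intro a b
    have := hv'2 a (-b)
    simpa [hvneg, sub_neg_eq_add] using this
  -- homomorphism facts
  have f0 : f 0 = 0 := by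
    have := hf 0 0; simp only [add_zero] at this; exact (left_eq_add.mp this)
  have g0 : g 0 = 0 := by
    have := hg 0 0; simp only [add_zero] at this; exact (left_eq_add.mp this)
  have fneg : ∀ x, f (-x) = -f x := by
    intro x
    have := hf x (-x)
    simp [f0] at this
    exact (neg_eq_of_add_eq_zero_right this.symm).symm
  have gneg : ∀ x, g (-x) = -g x := by
    intro x
    have := hg x (-x)
    simp [g0] at this
    exact (neg_eq_of_add_eq_zero_right this.symm).symm
  have fsub : ∀ x y, f (x - y) = f x - f y := by
    intro x y
    rw [sub_eq_add_neg, hf, fneg, sub_eq_add_neg]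
  have gsub : ∀ x y, g (x - y) = g x - g y := by
    intro x y
    rw [sub_eq_add_neg, hg, gneg, sub_eq_add_neg]
  intro z' y hy
  set z'' : G' := z' - (g y - f y) with hz''def
  have key : f y - z'' = g y - z' := by rw [hz''def]; abel
  have hne : f y ≠ z'' := by
    intro h
    apply hy
    have h0 : g y - z' = 0 := by rw [← key, h, sub_self]
    exact sub_eq_zero.mp h0
  obtain ⟨z, hz1, hz2⟩ := himm z'' y hne
  simp only at hz1 hz2
  -- r := v' (g y - z')
  have hrtop : v' (g y - z') < ⊤ := by
    refine lt_of_le_of_ne le_top ?_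
    intro h
    exact hy (sub_eq_zero.mp ((hv'1 _).1 h))
  have hdel : ∀ a : G, v' (g y - z') ≤ v' (f a) → v' (g y - z') < v' (g a - f a) := by
    intro a ha
    rcases hclose a with h | ⟨h1, _⟩
    · exact lt_of_le_of_lt ha h
    · rw [h1, sub_self, hv'0]; exact hrtop
  -- z is in the small ball around y and z
  have hzmem : z ∈ smallBall (fun a b : G => v (a - b)) y z := le_refl _
  have hfz : v' (f y - z'') ≤ v' (f y - f z) := hz2 ⟨z, hzmem, rfl⟩
  rw [key] at hz1 hfz
  refine ⟨z, ?_, ?_⟩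
  · -- v' (g y - z') < v' (g z - z')
    show v' (g y - z') < v' (g z - z')
    have hfa : v' (g y - z') ≤ v' (f (z - y)) := by
      rw [fsub]
      calc v' (g y - z') ≤ min (v' (f z - z'')) (v' (f y - z'')) := by
            refine le_min (le_of_lt hz1) ?_
            rw [key]
        _ ≤ v' ((f z - z'') - (f y - z'')) := hv'2 _ _
        _ = v' (f z - f y) := by congr 1; abel
    have hd := hdel (z - y) hfa
    have heq : g z - z' = (f z - z'') + (g (z - y) - f (z - y)) := by
      rw [gsub, fsub, hz''def]; abel
    rw [heq]
    exact lt_of_lt_of_le (lt_min hz1 hd) (hadd _ _)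
  · -- image containment
    rintro w' ⟨w, hw, rfl⟩
    have hfw : v' (g y - z') ≤ v' (f y - f w) := by
      have hm : v' (f y - z'') ≤ v' (f y - f w) := hz2 ⟨w, hw, rfl⟩
      rwa [key] at hm
    have hfa : v' (g y - z') ≤ v' (f (y - w)) := by rwa [fsub]
    have hd := hdel (y - w) hfa
    show v' (g y - z') ≤ v' (g y - g w)
    have heq : g y - g w = f (y - w) + (g (y - w) - f (y - w)) := by
      rw [gsub]; abel
    rw [heq]
    exact le_trans (le_min hfa (le_of_lt hd)) (hadd _ _)
end

section
/- If f : G → G' is an immediate group homomorphism between valued abelian groups, then the assignment va ↦ v'fa for f-regular a induces a well-defined, ≤-preserving map from {va | a ∈ Reg(f)} onto v'G'. -/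
/-- The set of `f`-regular elements. -/
def Reg {G G' : Type*} [AddCommGroup G] [AddCommGroup G']
    {Γ Γ' : Type*} [LinearOrder Γ] [OrderTop Γ] [LinearOrder Γ'] [OrderTop Γ']
    (v : G → Γ) (v' : G' → Γ') (f : G → G') : Set G :=
  {a | a ≠ 0 ∧ ∀ b : G, v a ≤ v b → v' (f a) ≤ v' (f b)}

/-- for an immediate group homomorphism `f`, the assignment `va ↦ v'fa`
on `f`-regular elements is well defined, `≤`-preserving, and onto `v'G'`. -/
theorem regular_value_map {G G' : Type*} [AddCommGroup G] [AddCommGroup G']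
    {Γ Γ' : Type*} [LinearOrder Γ] [OrderTop Γ] [LinearOrder Γ'] [OrderTop Γ']
    (v : G → Γ) (v' : G' → Γ') (hv : IsGroupVal v) (hv' : IsGroupVal v')
    (f : G → G') (hadd : ∀ x y : G, f (x + y) = f x + f y)
    (himm : ∀ a' : G', a' ≠ 0 → ∃ a ∈ Reg v v' f, v' a' < v' (a' - f a)) :
    (∀ a ∈ Reg v v' f, ∀ b ∈ Reg v v' f, v a = v b → v' (f a) = v' (f b)) ∧
    (∀ a ∈ Reg v v' f, ∀ b ∈ Reg v v' f, v a ≤ v b → v' (f a) ≤ v' (f b)) ∧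
    (∀ a' : G', a' ≠ 0 → ∃ a ∈ Reg v v' f, v' (f a) = v' a') := by
  obtain ⟨hv'top, hv'sub⟩ := hv'
  have hneg : ∀ x : G', v' (-x) = v' x := by
    intro x
    have h1 : v' x ≤ v' (-x) := by
      have := hv'sub 0 x
      simpa [(hv'top 0).mpr rfl] using this
    have h2 : v' (-x) ≤ v' x := by
      have := hv'sub 0 (-x)
      simpa [(hv'top 0).mpr rfl] using this
    exact le_antisymm h2 h1
  refine ⟨?_, ?_, ?_⟩
  · intro a ha b hb h
    exact le_antisymm (ha.2 b h.le) (hb.2 a h.ge)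
  · intro a ha b hb h
    exact ha.2 b h
  · intro a' ha'
    obtain ⟨a, ha, hlt⟩ := himm a' ha'
    refine ⟨a, ha, ?_⟩
    have h1 : v' a' ≤ v' (f a) := by
      have h := hv'sub a' (a' - f a)
      rw [sub_sub_cancel] at h
      exact le_trans (le_min le_rfl hlt.le) h
    have h2 : v' (f a) ≤ v' a' := by
      by_contra hlt2
      push_neg at hlt2
      have h := hv'sub (f a) (f a - a')
      rw [sub_sub_cancel] at h
      have heq : v' (f a - a') = v' (a' - f a) := by
        rw [← hneg (a' - f a), neg_sub]
      rw [heq] at h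
      exact absurd (lt_of_lt_of_le (lt_min hlt2 hlt) h) (lt_irrefl _)
    exact le_antisymm h2 h1
end

section
/- Let b ∈ Kⁿ, B a ball around 0 in (Kⁿ,v) with the minimum valuation, and f : b+B → Kⁿ pseudo-linear with pseudo-slope s. Then f(b+B) ⊆ fb + sB, and f : b+B → fb+sB is an immediate injective embedding of ultrametric spaces with value map α ↦ α+vs. If moreover (K,v) is spherically complete, f is a bijection from b+B onto fb+sB. -/
section sub
variable {Y Y' : Type*} {Γ Γ' : Type*} [LinearOrder Γ] [OrderTop Γ]
  [LinearOrder Γ'] [OrderTop Γ']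

/-- The smallest ball of the subspace `S` containing `x` and `y`. -/
def smallBallIn (u : Y → Y → Γ) (S : Set Y) (x y : Y) : Set Y :=
  {z ∈ S | u x y ≤ u x z}

/-- `f`, viewed as a map from the ultrametric subspace `S` to the ultrametric
subspace `S'`, is immediate: every `z' ∈ S'` is an attractor. -/
def ImmediateOn (u : Y → Y → Γ) (u' : Y' → Y' → Γ') (f : Y → Y')
    (S : Set Y) (S' : Set Y') : Prop :=
  ∀ z' ∈ S', ∀ y ∈ S, f y ≠ z' → ∃ z ∈ S,
    u' (f y) z' < u' (f z) z' ∧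
      f '' smallBallIn u S y z ⊆ smallBallIn u' S' (f y) z'

end sub

/-- The axioms of a (Krull) valuation on a field, written additively, with
`v a = ⊤` iff `a = 0`. -/
def IsFieldVal {K : Type*} [Field K] {Γ : Type*} [AddCommGroup Γ] [LinearOrder Γ] [IsOrderedAddMonoid Γ]
    (v : K → WithTop Γ) : Prop :=
  (∀ a, v a = ⊤ ↔ a = 0) ∧ (∀ a b, v (a * b) = v a + v b) ∧
  (∀ a b, min (v a) (v b) ≤ v (a - b))

/-- The minimum valuation on `Kⁿ`. -/
def minVal {K : Type*} [Field K] {Γ : Type*} [AddCommGroup Γ] [LinearOrder Γ] [IsOrderedAddMonoid Γ]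
    (v : K → WithTop Γ) {n : ℕ} (x : Fin n → K) : WithTop Γ :=
  Finset.univ.inf fun i => v (x i)

/-! Pseudo-linearity says that `f` shifts the valuation of differences by exactly `v s`; this gives
`f (b + B) ⊆ f b + s B` and injectivity at once. Given `y ∈ b + B` and `z' ∈ f b + s B` with
`f y ≠ z'`, the Newton step `z = y + s⁻¹ (z' - f y)` stays in `b + B`, because a ball around `0`
is closed under addition and subtraction, and the error term of pseudo-linearity makes `f z`
strictly closer to `z'` than `f y`: this is immediacy. If `z'` were not attained, the balls of
radius `v (f y - z') - v s` around the points `y ∈ b + B` would form a nest; spherical completeness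
of `K`, applied coordinatewise, yields a common point `a ∈ b + B`; the Newton step `z` from `a`
then has `v (a - z) = r a < r z ≤ v (z - a)`, where `r` is the radius. -/

open Set

namespace IsUltrametric

variable {Y Γ : Type*} [LinearOrder Γ] [OrderTop Γ] {u : Y → Y → Γ} {α β : Γ} {c c' y w : Y}

theorem le_of_mem_closedBall (hu : IsUltrametric u) (hy : y ∈ closedBall u α c)
    (hw : w ∈ closedBall u α c) : α ≤ u y w :=
  (le_min (hy.trans_eq (hu.2.2 c y)) hw).trans (hu.2.1 c y w)

theorem closedBall_subset (hu : IsUltrametric u) (hαβ : α ≤ β) (hc' : c' ∈ closedBall u α c) :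
    closedBall u β c' ⊆ closedBall u α c :=
  fun _ hx => (le_min hc' (hαβ.trans hx)).trans (hu.2.1 c' c _)

theorem closedBall_subset_of_mem_inter (hu : IsUltrametric u) (hαβ : α ≤ β)
    (hc : y ∈ closedBall u α c) (hc' : y ∈ closedBall u β c') :
    closedBall u β c' ⊆ closedBall u α c :=
  hu.closedBall_subset hαβ <|
    (le_min hc ((hαβ.trans hc').trans_eq (hu.2.2 c' y))).trans (hu.2.1 y c c')

end IsUltrametric

theorem isBall_closedBall {Y Γ : Type*} [LinearOrder Γ] [OrderTop Γ] (u : Y → Y → Γ) (α : Γ)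
    (c : Y) (hc : α ≤ u c c) : IsBall u (closedBall u α c) :=
  ⟨{(α, c)}, singleton_nonempty _, ⟨c, by simpa [closedBall] using hc⟩, by simp⟩

theorem IsBall.smallBall_subset {Y Γ : Type*} [LinearOrder Γ] [OrderTop Γ] {u : Y → Y → Γ}
    {S : Set Y} {y w : Y} (hu : IsUltrametric u) (hS : IsBall u S) (hy : y ∈ S) (hw : w ∈ S) :
    smallBall u y w ⊆ S := by
  obtain ⟨C, -, ⟨y₀, hy₀⟩, rfl⟩ := hS
  simp only [mem_iUnion₂] at hy hw
  obtain ⟨p, hp, hyp⟩ := hy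
  obtain ⟨q, hq, hwq⟩ := hw
  obtain ⟨m, hm, hym, hwm⟩ :
      ∃ m ∈ C, y ∈ closedBall u m.1 m.2 ∧ w ∈ closedBall u m.1 m.2 := by
    rcases le_total p.1 q.1 with h | h
    · exact ⟨p, hp, hyp, hu.closedBall_subset_of_mem_inter h (hy₀ p hp) (hy₀ q hq) hwq⟩
    · exact ⟨q, hq, hu.closedBall_subset_of_mem_inter h (hy₀ q hq) (hy₀ p hp) hyp, hwq⟩
  exact fun x hx => mem_biUnion hm (hu.closedBall_subset (hu.le_of_mem_closedBall hym hwm) hym hx)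

section valued

variable {K : Type*} [Field K] {Γ : Type*} [AddCommGroup Γ] [LinearOrder Γ]
  [IsOrderedAddMonoid Γ] {v : K → WithTop Γ}

namespace IsFieldVal

theorem map_zero (hv : IsFieldVal v) : v 0 = ⊤ := (hv.1 0).2 rfl

theorem map_ne_top (hv : IsFieldVal v) {a : K} (ha : a ≠ 0) : v a ≠ ⊤ := mt (hv.1 a).1 ha

theorem map_neg (hv : IsFieldVal v) (a : K) : v (-a) = v a := by
  have le_neg : ∀ a : K, v a ≤ v (-a) := fun a => by simpa [hv.map_zero] using hv.2.2 0 a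
  exact le_antisymm (by simpa using le_neg (-a)) (le_neg a)

theorem min_le_map_add (hv : IsFieldVal v) (a b : K) : min (v a) (v b) ≤ v (a + b) := by
  simpa [hv.map_neg] using hv.2.2 a (-b)

theorem isUltrametric (hv : IsFieldVal v) : IsUltrametric fun a c : K => v (a - c) :=
  ⟨fun a c => by simp [hv.1, sub_eq_zero],
    fun a c d => by simpa using hv.min_le_map_add (c - a) (a - d),
    fun a c => show v (a - c) = v (c - a) by rw [← neg_sub, hv.map_neg]⟩

end IsFieldVal

section minVal

variable {n : ℕ}

theorem le_minVal_iff {α : WithTop Γ} {x : Fin n → K} : α ≤ minVal v x ↔ ∀ i, α ≤ v (x i) := by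
  simp [minVal]

theorem minVal_le_apply (x : Fin n → K) (i : Fin n) : minVal v x ≤ v (x i) :=
  le_minVal_iff.1 le_rfl i

theorem minVal_eq_top_iff (hv : IsFieldVal v) {x : Fin n → K} : minVal v x = ⊤ ↔ x = 0 := by
  simp [minVal, hv.1, funext_iff]

theorem minVal_neg (hv : IsFieldVal v) (x : Fin n → K) : minVal v (-x) = minVal v x := by
  simp [minVal, hv.map_neg]

theorem minVal_sub_comm (hv : IsFieldVal v) (x y : Fin n → K) :
    minVal v (x - y) = minVal v (y - x) := by
  rw [← neg_sub, minVal_neg hv]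

theorem min_le_minVal_add (hv : IsFieldVal v) (x y : Fin n → K) :
    min (minVal v x) (minVal v y) ≤ minVal v (x + y) :=
  le_minVal_iff.2 fun i =>
    (min_le_min (minVal_le_apply x i) (minVal_le_apply y i)).trans (hv.min_le_map_add _ _)

theorem minVal_smul (hv : IsFieldVal v) (a : K) (x : Fin n → K) :
    minVal v (a • x) = v a + minVal v x := by
  simp only [minVal, Pi.smul_apply, smul_eq_mul, hv.2.1]
  exact (Finset.apply_inf_eq_inf_comp_of_linearOrder (v a + ·)
    (fun _ _ h => add_le_add_right h _) (WithTop.add_top _)).symm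

theorem add_minVal_inv_smul (hv : IsFieldVal v) {s : K} (hs : s ≠ 0) (x : Fin n → K) :
    v s + minVal v (s⁻¹ • x) = minVal v x := by
  rw [← minVal_smul hv, smul_inv_smul₀ hs]

theorem isUltrametric_minVal (hv : IsFieldVal v) :
    IsUltrametric fun x y : Fin n → K => minVal v (x - y) :=
  ⟨fun x y => by rw [minVal_eq_top_iff hv, sub_eq_zero],
    fun x y z => by simpa using min_le_minVal_add hv (y - x) (x - z),
    fun x y => minVal_sub_comm hv x y⟩

end minVal

section ball

variable {n : ℕ} {B : Set (Fin n → K)}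

theorem IsBall.mem_of_minVal_le (hv : IsFieldVal v)
    (hB : IsBall (fun x y : Fin n → K => minVal v (x - y)) B) (hB0 : 0 ∈ B) {w x : Fin n → K}
    (hw : w ∈ B) (hwx : minVal v w ≤ minVal v x) : x ∈ B :=
  hB.smallBall_subset (isUltrametric_minVal hv) hB0 hw <| by
    simpa [smallBall, closedBall, minVal_neg hv] using hwx

theorem IsBall.add_mem (hv : IsFieldVal v)
    (hB : IsBall (fun x y : Fin n → K => minVal v (x - y)) B) (hB0 : 0 ∈ B) {x y : Fin n → K}
    (hx : x ∈ B) (hy : y ∈ B) : x + y ∈ B := by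
  have hxy := min_le_minVal_add hv x y
  rcases le_total (minVal v x) (minVal v y) with h | h
  · exact hB.mem_of_minVal_le hv hB0 hx ((min_eq_left h).symm.trans_le hxy)
  · exact hB.mem_of_minVal_le hv hB0 hy ((min_eq_right h).symm.trans_le hxy)

theorem IsBall.sub_mem (hv : IsFieldVal v)
    (hB : IsBall (fun x y : Fin n → K => minVal v (x - y)) B) (hB0 : 0 ∈ B) {x y : Fin n → K}
    (hx : x ∈ B) (hy : y ∈ B) : x - y ∈ B :=
  sub_eq_add_neg x y ▸
    hB.add_mem hv hB0 hx (hB.mem_of_minVal_le hv hB0 hy (minVal_neg hv y).ge)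

end ball

theorem mem_image_add_left_iff {G : Type*} [AddCommGroup G] {b y : G} {B : Set G} :
    y ∈ (fun x => b + x) '' B ↔ y - b ∈ B := by
  simp [neg_add_eq_sub]

theorem mem_image_add_left_smul_iff {n : ℕ} {c y : Fin n → K} {s : K} (hs : s ≠ 0)
    {B : Set (Fin n → K)} :
    y ∈ (fun x => c + x) '' ((fun x => s • x) '' B) ↔ s⁻¹ • (y - c) ∈ B := by
  rw [mem_image_add_left_iff, image_smul, mem_smul_set_iff_inv_smul_mem₀ hs]

theorem SphericallyComplete.exists_forall_le_minVal_sub {n : ℕ} (hv : IsFieldVal v)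
    (hsc : SphericallyComplete fun a c : K => v (a - c)) {S : Set (Fin n → K)}
    (hS : S.Nonempty) {r : (Fin n → K) → WithTop Γ}
    (hr : ∀ y ∈ S, ∀ t ∈ S, r y ≤ r t → r y ≤ minVal v (y - t)) :
    ∃ a, ∀ y ∈ S, r y ≤ minVal v (y - a) := by
  have hcoord : ∀ k, ∃ a : K, ∀ y ∈ S, r y ≤ v (y k - a) := by
    intro k
    have hnest : ∀ y ∈ S, ∀ t ∈ S, r y ≤ r t →
        closedBall (fun a c : K => v (a - c)) (r t) (t k) ⊆
          closedBall (fun a c : K => v (a - c)) (r y) (y k) := fun y hy t ht h =>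
      hv.isUltrametric.closedBall_subset h ((hr y hy t ht h).trans (minVal_le_apply _ k))
    obtain ⟨a, ha⟩ := hsc ((fun y => closedBall (fun a c : K => v (a - c)) (r y) (y k)) '' S)
      (hS.image _)
      (forall_mem_image.2 fun y _ => isBall_closedBall _ _ _ (by simp [hv.map_zero]))
      (by
        rintro _ ⟨y, hy, rfl⟩ _ ⟨t, ht, rfl⟩ -
        rcases le_total (r y) (r t) with h | h
        · exact Or.inr (hnest y hy t ht h)
        · exact Or.inl (hnest t ht y hy h))
    exact ⟨a, fun y hy => ha _ ⟨y, hy, rfl⟩⟩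
  choose a ha using hcoord
  exact ⟨a, fun y hy => le_minVal_iff.2 fun k => ha k y hy⟩

def IsPseudoLinearOn {n : ℕ} (v : K → WithTop Γ) (f : (Fin n → K) → Fin n → K) (s : K)
    (S : Set (Fin n → K)) : Prop :=
  ∀ y ∈ S, ∀ z ∈ S, y ≠ z →
    minVal v (f y - f z) = v s + minVal v (y - z) ∧
      v s + minVal v (y - z) < minVal v (f y - f z - s • (y - z))

namespace IsPseudoLinearOn

variable {n : ℕ} {f : (Fin n → K) → Fin n → K} {s : K}

section

variable {S : Set (Fin n → K)} {y z z' : Fin n → K}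

theorem minVal_sub_eq (hf : IsPseudoLinearOn v f s S) (hv : IsFieldVal v) (hy : y ∈ S)
    (hz : z ∈ S) : minVal v (f y - f z) = v s + minVal v (y - z) := by
  obtain rfl | hyz := eq_or_ne y z
  · simp [(minVal_eq_top_iff hv).2]
  · exact (hf y hy z hz hyz).1

theorem injOn (hf : IsPseudoLinearOn v f s S) (hv : IsFieldVal v) (hs : s ≠ 0) : InjOn f S := by
  intro y hy z hz hfyz
  have h := hf.minVal_sub_eq hv hy hz
  rw [hfyz, sub_self, (minVal_eq_top_iff hv).2 rfl, eq_comm,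
    WithTop.add_eq_top, or_iff_right (hv.map_ne_top hs), minVal_eq_top_iff hv] at h
  exact sub_eq_zero.1 h

theorem minVal_sub_lt_of_eq_add_smul (hf : IsPseudoLinearOn v f s S) (hv : IsFieldVal v)
    (hy : y ∈ S) (hz : z ∈ S) (hz' : z' = f y + s • (z - y)) (hne : f y ≠ z') :
    minVal v (f y - z') < minVal v (f z - z') := by
  have hzy : z ≠ y := by
    rintro rfl
    simp [hz'] at hne
  calc minVal v (f y - z') = v s + minVal v (z - y) := by
        rw [hz', sub_add_cancel_left, minVal_neg hv, minVal_smul hv]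
    _ < minVal v (f z - f y - s • (z - y)) := (hf z hz y hy hzy).2
    _ = minVal v (f z - z') := by rw [hz', sub_sub]

end

variable {b : Fin n → K} {B : Set (Fin n → K)}

theorem mapsTo (hf : IsPseudoLinearOn v f s ((fun x => b + x) '' B)) (hv : IsFieldVal v)
    (hB : IsBall (fun x y : Fin n → K => minVal v (x - y)) B) (hB0 : 0 ∈ B) (hs : s ≠ 0) :
    MapsTo f ((fun x => b + x) '' B) ((fun x => f b + x) '' ((fun x => s • x) '' B)) := by
  intro y hy
  have hb : b ∈ (fun x => b + x) '' B := ⟨0, hB0, add_zero b⟩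
  rw [mem_image_add_left_smul_iff hs]
  refine hB.mem_of_minVal_le hv hB0 (mem_image_add_left_iff.1 hy) ?_
  rw [← WithTop.add_le_add_iff_left (hv.map_ne_top hs), add_minVal_inv_smul hv hs,
    hf.minVal_sub_eq hv hy hb]

theorem exists_minVal_sub_lt (hf : IsPseudoLinearOn v f s ((fun x => b + x) '' B))
    (hv : IsFieldVal v) (hB : IsBall (fun x y : Fin n → K => minVal v (x - y)) B) (hB0 : 0 ∈ B)
    (hs : s ≠ 0) {y z' : Fin n → K} (hy : y ∈ (fun x => b + x) '' B)
    (hz' : z' ∈ (fun x => f b + x) '' ((fun x => s • x) '' B)) (hne : f y ≠ z') :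
    ∃ z ∈ (fun x => b + x) '' B, v s + minVal v (y - z) = minVal v (f y - z') ∧
      minVal v (f y - z') < minVal v (f z - z') := by
  have hfy := mem_image_add_left_smul_iff hs |>.1 (hf.mapsTo hv hB hB0 hs hy)
  rw [mem_image_add_left_smul_iff hs] at hz'
  rw [mem_image_add_left_iff] at hy
  set z := y + s⁻¹ • (z' - f y)
  have hz : z ∈ (fun x => b + x) '' B := by
    have : z - b = (y - b) + (s⁻¹ • (z' - f b) - s⁻¹ • (f y - f b)) := by
      simp only [z, smul_sub]
      abel
    rw [mem_image_add_left_iff, this]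
    exact hB.add_mem hv hB0 hy (hB.sub_mem hv hB0 hz' hfy)
  refine ⟨z, hz, ?_, hf.minVal_sub_lt_of_eq_add_smul hv ?_ hz ?_ hne⟩
  · rw [sub_add_cancel_left, minVal_neg hv, add_minVal_inv_smul hv hs, minVal_sub_comm hv]
  · exact mem_image_add_left_iff.2 hy
  · rw [add_sub_cancel_left, smul_inv_smul₀ hs, add_sub_cancel]

theorem immediateOn (hf : IsPseudoLinearOn v f s ((fun x => b + x) '' B)) (hv : IsFieldVal v)
    (hB : IsBall (fun x y : Fin n → K => minVal v (x - y)) B) (hB0 : 0 ∈ B) (hs : s ≠ 0) :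
    ImmediateOn (fun x y : Fin n → K => minVal v (x - y))
      (fun x y : Fin n → K => minVal v (x - y)) f
      ((fun x => b + x) '' B) ((fun x => f b + x) '' ((fun x => s • x) '' B)) := by
  intro z' hz' y hy hne
  obtain ⟨z, hz, hyz, hlt⟩ := hf.exists_minVal_sub_lt hv hB hB0 hs hy hz' hne
  refine ⟨z, hz, hlt, ?_⟩
  rintro _ ⟨t, ⟨ht, hzt⟩, rfl⟩
  refine ⟨hf.mapsTo hv hB hB0 hs ht, ?_⟩
  change minVal v (f y - z') ≤ minVal v (f y - f t)
  rw [← hyz, hf.minVal_sub_eq hv hy ht]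
  exact add_le_add_right hzt _

theorem surjOn (hf : IsPseudoLinearOn v f s ((fun x => b + x) '' B)) (hv : IsFieldVal v)
    (hB : IsBall (fun x y : Fin n → K => minVal v (x - y)) B) (hB0 : 0 ∈ B) (hs : s ≠ 0)
    (hsc : SphericallyComplete fun a c : K => v (a - c)) :
    SurjOn f ((fun x => b + x) '' B) ((fun x => f b + x) '' ((fun x => s • x) '' B)) := by
  intro z' hz'
  by_contra hz'f
  have hvs := hv.map_ne_top hs
  set r := fun y => minVal v (s⁻¹ • (f y - z'))
  have hr : ∀ y, v s + r y = minVal v (f y - z') := fun y => add_minVal_inv_smul hv hs _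
  have hnest : ∀ y ∈ (fun x => b + x) '' B, ∀ t ∈ (fun x => b + x) '' B,
      r y ≤ r t → r y ≤ minVal v (y - t) := by
    intro y hy t ht h
    rw [← WithTop.add_le_add_iff_left hvs, hr, hr] at h
    rw [← WithTop.add_le_add_iff_left hvs, hr, ← hf.minVal_sub_eq hv hy ht]
    simpa [min_eq_left h, minVal_sub_comm hv z'] using
      min_le_minVal_add hv (f y - z') (z' - f t)
  have hb : b ∈ (fun x => b + x) '' B := ⟨0, hB0, add_zero b⟩
  obtain ⟨a, ha⟩ := hsc.exists_forall_le_minVal_sub hv ⟨b, hb⟩ hnest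
  have haS : a ∈ (fun x => b + x) '' B := by
    have hrb : minVal v (s⁻¹ • (z' - f b)) = r b := by
      rw [← neg_sub, smul_neg, minVal_neg hv]
    refine mem_image_add_left_iff.2 <| hB.mem_of_minVal_le hv hB0
      ((mem_image_add_left_smul_iff hs).1 hz') ?_
    rw [hrb, minVal_sub_comm hv]
    exact ha b hb
  obtain ⟨z, hz, haz, hlt⟩ :=
    hf.exists_minVal_sub_lt hv hB hB0 hs haS hz' fun h => hz'f ⟨a, haS, h⟩
  rw [← hr, WithTop.add_left_inj hvs] at haz
  rw [← hr, ← hr, WithTop.add_lt_add_iff_left hvs] at hlt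
  exact (ha z hz).not_gt (by rwa [minVal_sub_comm hv, haz])

end IsPseudoLinearOn

end valued

/-- a pseudo-linear map with pseudo-slope `s` on `b + B` maps into
`f b + sB`, is an immediate injective embedding with value map `α ↦ α + vs`, and is a
bijection onto `f b + sB` if `(K,v)` is spherically complete. -/
theorem pseudoLinear_immediate {K : Type*} [Field K] {Γ : Type*}
    [AddCommGroup Γ] [LinearOrder Γ] [IsOrderedAddMonoid Γ] (v : K → WithTop Γ) (hv : IsFieldVal v)
    {n : ℕ} (b : Fin n → K) (B : Set (Fin n → K))
    (hB : IsBall (fun x y : Fin n → K => minVal v (x - y)) B) (hB0 : (0 : Fin n → K) ∈ B)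
    (s : K) (hs : s ≠ 0) (f : (Fin n → K) → (Fin n → K))
    (hpl : ∀ y ∈ (fun x => b + x) '' B, ∀ z ∈ (fun x => b + x) '' B, y ≠ z →
      minVal v (f y - f z) = v s + minVal v (y - z) ∧
        v s + minVal v (y - z) < minVal v (f y - f z - s • (y - z))) :
    Set.MapsTo f ((fun x => b + x) '' B) ((fun x => f b + x) '' ((fun x => s • x) '' B)) ∧
    ImmediateOn (fun x y : Fin n → K => minVal v (x - y))
      (fun x y : Fin n → K => minVal v (x - y)) f
      ((fun x => b + x) '' B) ((fun x => f b + x) '' ((fun x => s • x) '' B)) ∧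
    Set.InjOn f ((fun x => b + x) '' B) ∧
    (SphericallyComplete (fun a c : K => v (a - c)) →
      Set.BijOn f ((fun x => b + x) '' B)
        ((fun x => f b + x) '' ((fun x => s • x) '' B))) := by
  have hf : IsPseudoLinearOn v f s ((fun x => b + x) '' B) := hpl
  have hmaps := hf.mapsTo hv hB hB0 hs
  have hinj := hf.injOn hv hs
  exact ⟨hmaps, hf.immediateOn hv hB hB0 hs, hinj,
    fun hsc => ⟨hmaps, hinj, hf.surjOn hv hB hB0 hs hsc⟩⟩
end
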